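/- arXiv:2112.03598 — 10 statements merged into one kernel-verified Lean document; each statement's English description precedes it below -/
import Mathlib

section
/- Let (Ω, F, P) be a probability space carrying an i.i.d. sequence (M_j)_{j≥1} of real random variables with |M_j| ≤ c_0 almost surely for some constant c_0 < ∞, and an i.i.d. sequence (η_j)_{j≥1} of [0,1]-valued random variables with E[η_1] = p̄, the two sequences being independent of each other. Let γ ∈ (0,1], γ_p > 0, and for each n ≥ 1 and each j ∈ {1,…,⌊γn⌋} let A_j^n be a (0,∞)-valued random variable (no independence from (M_j), (η_j) is assumed). Define ζ^n := Σ_{j=1}^{⌊γn⌋} M_j (1−η_j) / A_j^n and the event E := { ω : Σ_{j=1}^{⌊γn⌋} | 1/A_j^n − 1/(n γ_p) | → 0 as n → ∞ }. Then ζ^n → E[M_1] (1−p̄) γ / γ_p almost surely on E, i.e., there is a measurable set B ⊆ E with P(B) = P(E) on which this convergence holds pointwise. In particular, if P(E) = 1, then ζ^n → E[M_1] (1−p̄) γ / γ_p almost surely. -/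
/-!
The products `X_j = M_j (1 - η_j)` are i.i.d. and bounded, so by the strong law their Cesàro
means converge almost surely to `E[X₁] = E[M₁](1 - p̄)` (independence of `M₁` and `η₁`).
Splitting `1/A_j^n = 1/(nγ_p) + (1/A_j^n - 1/(nγ_p))`, the flat part of `ζ^n` is
`⌊γn⌋/(nγ_p)` times a Cesàro mean of `X`, hence tends to `(γ/γ_p) E[X₁]`, while the remainder
is at most `c₀ ∑_j |1/A_j^n - 1/(nγ_p)|`, which vanishes on `E`.
-/

open MeasureTheory ProbabilityTheory Filter Topology Finset

section WeightedAverages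

variable {ι : Type*} {l : Filter ι} {x : ℕ → ℝ} {m : ι → ℕ} {w : ι → ℕ → ℝ} {v : ι → ℝ}

lemma tendsto_sum_mul_sub_of_abs_le {C : ℝ} (hx : ∀ j, |x j| ≤ C)
    (hw : Tendsto (fun n => ∑ j ∈ range (m n), |w n j - v n|) l (𝓝 0)) :
    Tendsto (fun n => ∑ j ∈ range (m n), x j * (w n j - v n)) l (𝓝 0) := by
  have hC : Tendsto (fun n => C * ∑ j ∈ range (m n), |w n j - v n|) l (𝓝 0) := by
    simpa using hw.const_mul C
  refine squeeze_zero_norm (fun n => ?_) hC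
  calc ‖∑ j ∈ range (m n), x j * (w n j - v n)‖
      ≤ ∑ j ∈ range (m n), |x j| * |w n j - v n| := by
        simpa only [Real.norm_eq_abs, abs_mul] using
          norm_sum_le (range (m n)) fun j => x j * (w n j - v n)
    _ ≤ ∑ j ∈ range (m n), C * |w n j - v n| := by
        gcongr with j; exact hx j
    _ = C * ∑ j ∈ range (m n), |w n j - v n| := (mul_sum _ _ _).symm

lemma tendsto_mul_sum_of_tendsto_average {L κ : ℝ}
    (hx : Tendsto (fun k : ℕ => (k : ℝ)⁻¹ * ∑ j ∈ range k, x j) atTop (𝓝 L))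
    (hm : Tendsto m l atTop) (hmv : Tendsto (fun n => (m n : ℝ) * v n) l (𝓝 κ)) :
    Tendsto (fun n => v n * ∑ j ∈ range (m n), x j) l (𝓝 (κ * L)) := by
  refine (hmv.mul (hx.comp hm)).congr' ?_
  filter_upwards [hm.eventually_ne_atTop 0] with n hn
  have : (m n : ℝ) ≠ 0 := Nat.cast_ne_zero.mpr hn
  simp only [Function.comp_apply]
  field_simp

theorem tendsto_sum_mul_of_tendsto_average {C L κ : ℝ} (hbdd : ∀ j, |x j| ≤ C)
    (hx : Tendsto (fun k : ℕ => (k : ℝ)⁻¹ * ∑ j ∈ range k, x j) atTop (𝓝 L))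
    (hm : Tendsto m l atTop) (hmv : Tendsto (fun n => (m n : ℝ) * v n) l (𝓝 κ))
    (hw : Tendsto (fun n => ∑ j ∈ range (m n), |w n j - v n|) l (𝓝 0)) :
    Tendsto (fun n => ∑ j ∈ range (m n), x j * w n j) l (𝓝 (κ * L)) := by
  have hsplit : ∀ n, ∑ j ∈ range (m n), x j * w n j
      = v n * ∑ j ∈ range (m n), x j + ∑ j ∈ range (m n), x j * (w n j - v n) := by
    intro n
    rw [mul_sum, ← sum_add_distrib]
    exact sum_congr rfl fun j _ => by ring
  simpa only [hsplit, add_zero] using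
    (tendsto_mul_sum_of_tendsto_average hx hm hmv).add (tendsto_sum_mul_sub_of_abs_le hbdd hw)

end WeightedAverages

section IIDPairs

variable {Ω β : Type*} [MeasurableSpace Ω] [MeasurableSpace β] {P : Measure Ω}
  {X Y : ℕ → Ω → β}

lemma iIndepFun.pairwise_indepFun_comp_prodMk (hindep : iIndepFun (Sum.elim X Y) P)
    (hX : ∀ j, Measurable (X j)) (hY : ∀ j, Measurable (Y j)) {g : β × β → ℝ}
    (hg : Measurable g) :
    Pairwise fun i j => IndepFun (fun ω => g (X i ω, Y i ω)) (fun ω => g (X j ω, Y j ω)) P := by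
  intro i j hij
  have hmeas : ∀ k, Measurable (Sum.elim X Y k) := by
    rintro (k | k)
    exacts [hX k, hY k]
  exact (hindep.indepFun_prodMk_prodMk hmeas (.inl i) (.inr i) (.inl j) (.inr j)
    (by simp [hij]) (by simp) (by simp) (by simp [hij])).comp hg hg

lemma identDistrib_comp_prodMk [IsFiniteMeasure P] (hindep : iIndepFun (Sum.elim X Y) P)
    (hXident : ∀ j, IdentDistrib (X j) (X 0) P P) (hYident : ∀ j, IdentDistrib (Y j) (Y 0) P P)
    {g : β × β → ℝ} (hg : Measurable g) (j : ℕ) :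
    IdentDistrib (fun ω => g (X j ω, Y j ω)) (fun ω => g (X 0 ω, Y 0 ω)) P P :=
  have hpair : ∀ k, IndepFun (X k) (Y k) P := fun k =>
    hindep.indepFun (i := .inl k) (j := .inr k) (by simp)
  ((hXident j).prodMk (hYident j) (hpair j) (hpair 0)).comp hg

theorem strong_law_ae_comp_prodMk [IsProbabilityMeasure P] (hindep : iIndepFun (Sum.elim X Y) P)
    (hX : ∀ j, Measurable (X j)) (hY : ∀ j, Measurable (Y j))
    (hXident : ∀ j, IdentDistrib (X j) (X 0) P P) (hYident : ∀ j, IdentDistrib (Y j) (Y 0) P P)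
    {g : β × β → ℝ} (hg : Measurable g) (hint : Integrable (fun ω => g (X 0 ω, Y 0 ω)) P) :
    ∀ᵐ ω ∂P, Tendsto (fun n : ℕ => (n : ℝ)⁻¹ * ∑ j ∈ range n, g (X j ω, Y j ω)) atTop
      (𝓝 (∫ ω, g (X 0 ω, Y 0 ω) ∂P)) :=
  strong_law_ae (fun j ω => g (X j ω, Y j ω)) hint
    (iIndepFun.pairwise_indepFun_comp_prodMk hindep hX hY hg)
    (identDistrib_comp_prodMk hindep hXident hYident hg)

end IIDPairs

lemma tendsto_natFloor_mul_mul_one_div {γ : ℝ} (hγ : 0 ≤ γ) (c : ℝ) :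
    Tendsto (fun n : ℕ => (⌊γ * n⌋₊ : ℝ) * (1 / (n * c))) atTop (𝓝 (γ / c)) := by
  refine (((tendsto_nat_floor_mul_div_atTop hγ).comp tendsto_natCast_atTop_atTop).div_const c).congr
    fun n => ?_
  simp only [Function.comp_apply]
  ring

lemma abs_mul_one_sub_le {a c t : ℝ} (ha : |a| ≤ c) (ht : t ∈ Set.Icc (0 : ℝ) 1) :
    |a * (1 - t)| ≤ c := by
  have : |1 - t| ≤ 1 := abs_le.mpr ⟨by linarith [ht.2], by linarith [ht.1]⟩
  rw [abs_mul]
  exact (mul_le_of_le_one_right (abs_nonneg a) this).trans ha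

lemma integral_mul_one_sub_of_indepFun {Ω : Type*} [MeasurableSpace Ω] {P : Measure Ω}
    [IsProbabilityMeasure P] {f g : Ω → ℝ} (hfg : IndepFun f g P) (hf : Measurable f)
    (hg : Integrable g P) :
    ∫ ω, f ω * (1 - g ω) ∂P = (∫ ω, f ω ∂P) * (1 - ∫ ω, g ω ∂P) := by
  have hindep : IndepFun f (fun ω => 1 - g ω) P :=
    hfg.comp measurable_id (measurable_const.sub measurable_id)
  have hmean : ∫ ω, (1 - g ω) ∂P = 1 - ∫ ω, g ω ∂P := by
    simp [integral_sub (integrable_const 1) hg]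
  rw [← hmean]
  exact hindep.integral_mul_eq_mul_integral hf.aestronglyMeasurable
    (aestronglyMeasurable_const.sub hg.aestronglyMeasurable)

lemma exists_measurableSet_subset_measure_eq_of_ae {Ω : Type*} [MeasurableSpace Ω]
    {μ : Measure Ω} {E : Set Ω} {q : Ω → Prop} (hE : MeasurableSet E) (hq : ∀ᵐ ω ∂μ, q ω) :
    ∃ B, MeasurableSet B ∧ B ⊆ E ∧ μ B = μ E ∧ ∀ ω ∈ B, q ω := by
  refine ⟨E \ toMeasurable μ {ω | ¬q ω}, hE.diff (measurableSet_toMeasurable _ _),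
    Set.sdiff_subset, measure_sdiff_null ?_, fun ω hω => ?_⟩
  · rwa [measure_toMeasurable, ← ae_iff]
  · by_contra h
    exact hω.2 (subset_toMeasurable _ _ h)

theorem master_lemma_general
    {Ω : Type*} [MeasurableSpace Ω] (P : Measure Ω) [IsProbabilityMeasure P]
    (M η : ℕ → Ω → ℝ) (A : ℕ → ℕ → Ω → ℝ) (c₀ pbar γ γp : ℝ)
    (hMmeas : ∀ j, Measurable (M j)) (hηmeas : ∀ j, Measurable (η j))
    (hAmeas : ∀ n j, Measurable (A n j))
    (hMident : ∀ j, IdentDistrib (M j) (M 0) P P)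
    (hηident : ∀ j, IdentDistrib (η j) (η 0) P P)
    (hindep : iIndepFun (Sum.elim M η) P)
    (hMbdd : ∀ j, ∀ᵐ ω ∂P, |M j ω| ≤ c₀)
    (hηrange : ∀ j ω, η j ω ∈ Set.Icc (0 : ℝ) 1)
    (hηmean : ∫ ω, η 0 ω ∂P = pbar)
    (hγ : 0 < γ) :
    ∃ B : Set Ω, MeasurableSet B
      ∧ B ⊆ {ω | Tendsto (fun n : ℕ => ∑ j ∈ Finset.range ⌊γ * (n : ℝ)⌋₊,
              |1 / A n j ω - 1 / ((n : ℝ) * γp)|) atTop (nhds 0)}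
      ∧ P B = P {ω | Tendsto (fun n : ℕ => ∑ j ∈ Finset.range ⌊γ * (n : ℝ)⌋₊,
              |1 / A n j ω - 1 / ((n : ℝ) * γp)|) atTop (nhds 0)}
      ∧ ∀ ω ∈ B, Tendsto
          (fun n : ℕ => ∑ j ∈ Finset.range ⌊γ * (n : ℝ)⌋₊,
            M j ω * (1 - η j ω) / A n j ω) atTop
          (nhds ((∫ ω, M 0 ω ∂P) * (1 - pbar) * γ / γp)) := by
  have hbdd : ∀ᵐ ω ∂P, ∀ j, |M j ω * (1 - η j ω)| ≤ c₀ := by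
    filter_upwards [ae_all_iff.2 hMbdd] with ω hω j
    exact abs_mul_one_sub_le (hω j) (hηrange j ω)
  have hηint : Integrable (η 0) P :=
    .of_bound (hηmeas 0).aestronglyMeasurable 1 <| .of_forall fun ω => by
      simpa [abs_le] using ⟨(hηrange 0 ω).1.trans' (by norm_num), (hηrange 0 ω).2⟩
  have hint : Integrable (fun ω => M 0 ω * (1 - η 0 ω)) P :=
    .of_bound (by fun_prop) c₀ ((ae_all_iff.1 hbdd) 0)
  have hmean : ∫ ω, M 0 ω * (1 - η 0 ω) ∂P = (∫ ω, M 0 ω ∂P) * (1 - pbar) := by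
    rw [integral_mul_one_sub_of_indepFun (f := M 0) (g := η 0)
      (hindep.indepFun (i := .inl 0) (j := .inr 0) (by simp)) (hMmeas 0) hηint, hηmean]
  have hslln := strong_law_ae_comp_prodMk hindep hMmeas hηmeas hMident hηident
    (g := fun p => p.1 * (1 - p.2)) (by fun_prop) hint
  have hE : MeasurableSet {ω | Tendsto (fun n : ℕ => ∑ j ∈ Finset.range ⌊γ * (n : ℝ)⌋₊,
      |1 / A n j ω - 1 / ((n : ℝ) * γp)|) atTop (nhds 0)} :=
    measurableSet_tendsto _ fun n => by fun_prop
  obtain ⟨B, hB, hBE, hPB, hgood⟩ := exists_measurableSet_subset_measure_eq_of_ae hE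
    (hbdd.and hslln)
  refine ⟨B, hB, hBE, hPB, fun ω hω => ?_⟩
  have hm : Tendsto (fun n : ℕ => ⌊γ * n⌋₊) atTop atTop :=
    tendsto_nat_floor_atTop.comp (tendsto_natCast_atTop_atTop.const_mul_atTop hγ)
  convert tendsto_sum_mul_of_tendsto_average (hgood ω hω).1 (hgood ω hω).2 hm
    (tendsto_natFloor_mul_mul_one_div hγ.le γp) (hBE hω)
    using 2 with n
  · exact Finset.sum_congr rfl fun j _ => (mul_one_div _ _).symm
  · rw [hmean]
    ring

/-- **Master Lemma on weighted sums over a random graph.**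
Let `(M_j)` be i.i.d. real random variables bounded by `c₀` a.s., `(η_j)` i.i.d.
`[0,1]`-valued random variables with mean `p̄`, the two sequences being (mutually)
independent.  For positive random variables `A_j^n`, let
`ζ^n = ∑_{j<⌊γn⌋} M_j (1−η_j)/A_j^n`, and let `E` be the event on which
`∑_{j<⌊γn⌋} |1/A_j^n − 1/(nγ_p)| → 0`.  Then `ζ^n → E[M₁](1−p̄)γ/γ_p` almost surely
on `E`: there is a measurable `B ⊆ E` with `P(B) = P(E)` on which the convergence
holds pointwise. -/
theorem master_lemma
    {Ω : Type*} [MeasurableSpace Ω] (P : Measure Ω) [IsProbabilityMeasure P]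
    (M η : ℕ → Ω → ℝ) (A : ℕ → ℕ → Ω → ℝ) (c₀ pbar γ γp : ℝ)
    (hMmeas : ∀ j, Measurable (M j)) (hηmeas : ∀ j, Measurable (η j))
    (hAmeas : ∀ n j, Measurable (A n j))
    (hApos : ∀ n j ω, 0 < A n j ω)
    (hMident : ∀ j, IdentDistrib (M j) (M 0) P P)
    (hηident : ∀ j, IdentDistrib (η j) (η 0) P P)
    (hindep : iIndepFun (Sum.elim M η) P)
    (hMbdd : ∀ j, ∀ᵐ ω ∂P, |M j ω| ≤ c₀)
    (hηrange : ∀ j ω, η j ω ∈ Set.Icc (0 : ℝ) 1)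
    (hηmean : ∫ ω, η 0 ω ∂P = pbar)
    (hγ : 0 < γ) (hγ1 : γ ≤ 1) (hγp : 0 < γp) :
    ∃ B : Set Ω, MeasurableSet B
      ∧ B ⊆ {ω | Tendsto (fun n : ℕ => ∑ j ∈ Finset.range ⌊γ * (n : ℝ)⌋₊,
              |1 / A n j ω - 1 / ((n : ℝ) * γp)|) atTop (nhds 0)}
      ∧ P B = P {ω | Tendsto (fun n : ℕ => ∑ j ∈ Finset.range ⌊γ * (n : ℝ)⌋₊,
              |1 / A n j ω - 1 / ((n : ℝ) * γp)|) atTop (nhds 0)}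
      ∧ ∀ ω ∈ B, Tendsto
          (fun n : ℕ => ∑ j ∈ Finset.range ⌊γ * (n : ℝ)⌋₊,
            M j ω * (1 - η j ω) / A n j ω) atTop
          (nhds ((∫ ω, M 0 ω ∂P) * (1 - pbar) * γ / γp)) :=
  master_lemma_general P M η A c₀ pbar γ γp hMmeas hηmeas hAmeas hMident hηident hindep hMbdd
    hηrange hηmean hγ
end

section
/- In the two-group random graph model, assume B.1 and B.2. Fix constants x̄^1, x̄^2 ∈ [0,y] and x̄_b ∈ [0,y] (a 'constant sequence'), and set x_b := f^b(x̄_b). Then almost surely, for every m ∈ {1,2} and every node index i of group m: f̄_i^{n,m}(x̄_b, x̄) → E[f^1(G^1, x̄^1, η^{bs,1} x_b)] · γ p_{1m}(1−p_1^{sb})/γ̄_{p1} + E[f^2(G^2, x̄^2, η^{bs,2} x_b)] · (1−γ) p_{2m}(1−p_2^{sb})/γ̄_{p2} as n → ∞ (where G^m, η^{bs,m} denote generic members of the corresponding i.i.d. families, p_{11} := p_1, p_{12} := p_{c1}, p_{21} := p_{c2}, p_{22} := p_2), and f̄_b^n(x̄_b, x̄) → γ E[f^1(G^1, x̄^1,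 η^{bs,1} x_b)] p_1^{sb} + (1−γ) E[f^2(G^2, x̄^2, η^{bs,2} x_b)] p_2^{sb}. -/
open MeasureTheory ProbabilityTheory Filter

/-- The two-group random graph model of the paper: two groups of small nodes of sizes
`⌊γn⌋` and `n − ⌊γn⌋` plus one big node, mutually independent Bernoulli edge
indicators `I`, i.i.d. `[0,1]`-valued big-node weights `ηsb` with group means
`psb m`, i.i.d. bounded `ηbs`, i.i.d. environments `G`, and the bounded continuous
performance functions `f 0, f 1, fb` of assumption B.1. Group `0` is `G₁` and group
`1` is `G₂`; `p m` is the within-group edge probability of group `m` and `pc m` the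
probability of an edge from group `m` to the other group. -/
structure TwoGroupModel (Ω : Type) [MeasurableSpace Ω] where
  P : Measure Ω
  isProb : IsProbabilityMeasure P
  γ : ℝ
  y : ℝ
  p : Fin 2 → ℝ
  pc : Fin 2 → ℝ
  psb : Fin 2 → ℝ
  f : Fin 2 → ℝ → ℝ → ℝ → ℝ
  fb : ℝ → ℝ
  I : (Fin 2 × ℕ) → (Fin 2 × ℕ) → Ω → ℝ
  ηsb : (Fin 2 × ℕ) → Ω → ℝ
  ηbs : (Fin 2 × ℕ) → Ω → ℝ
  G : (Fin 2 × ℕ) → Ω → ℝ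
  hγ : γ ∈ Set.Ioo (0 : ℝ) 1
  hy : 0 < y
  hp : ∀ m, p m ∈ Set.Icc (0 : ℝ) 1
  hpc : ∀ m, pc m ∈ Set.Icc (0 : ℝ) 1
  hpsb : ∀ m, psb m ∈ Set.Icc (0 : ℝ) 1
  measI : ∀ j i, Measurable (I j i)
  measηsb : ∀ j, Measurable (ηsb j)
  measηbs : ∀ j, Measurable (ηbs j)
  measG : ∀ j, Measurable (G j)
  I01 : ∀ j i ω, I j i ω = 0 ∨ I j i ω = 1
  Idist : ∀ (m : Fin 2) (j : ℕ) (m' : Fin 2) (i : ℕ),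
    P {ω | I (m, j) (m', i) ω = 1} = ENNReal.ofReal (if m = m' then p m else pc m)
  ηsbRange : ∀ j ω, ηsb j ω ∈ Set.Icc (0 : ℝ) 1
  ηsbMean : ∀ (m : Fin 2) (j : ℕ), ∫ ω, ηsb (m, j) ω ∂P = psb m
  ηsbIdent : ∀ (m : Fin 2) (j : ℕ), IdentDistrib (ηsb (m, j)) (ηsb (m, 0)) P P
  ηbsBdd : ∃ C : ℝ, ∀ j ω, |ηbs j ω| ≤ C
  ηbsIdent : ∀ (m : Fin 2) (j : ℕ), IdentDistrib (ηbs (m, j)) (ηbs (m, 0)) P P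
  GIdent : ∀ (m : Fin 2) (j : ℕ), IdentDistrib (G (m, j)) (G (m, 0)) P P
  indep : iIndepFun (m := fun _ => (inferInstance : MeasurableSpace ℝ))
    (Sum.elim (fun q : (Fin 2 × ℕ) × (Fin 2 × ℕ) => I q.1 q.2)
      (Sum.elim ηsb (Sum.elim ηbs G))) P
  hfCont : ∀ m, Continuous fun t : ℝ × ℝ × ℝ => f m t.1 t.2.1 t.2.2
  hfRange : ∀ m g x xb, f m g x xb ∈ Set.Icc 0 y
  hfbCont : Continuous fb
  hfbRange : ∀ x, fb x ∈ Set.Icc 0 y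

namespace TwoGroupModel

variable {Ω : Type} [MeasurableSpace Ω] (M : TwoGroupModel Ω)

/-- Size of group `m` when there are `n` small nodes: `n₁ = ⌊γn⌋`, `n₂ = n − n₁`. -/
noncomputable def nsz (n : ℕ) (m : Fin 2) : ℕ :=
  if m = 0 then ⌊M.γ * (n : ℝ)⌋₊ else n - ⌊M.γ * (n : ℝ)⌋₊

/-- Limiting fraction of nodes in group `m`: `γ` resp. `1 − γ`. -/
noncomputable def gam (m : Fin 2) : ℝ := if m = 0 then M.γ else 1 - M.γ

/-- Probability of an edge from a group-`m` node to a group-`m'` node. -/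
noncomputable def pConn (m m' : Fin 2) : ℝ := if m = m' then M.p m else M.pc m

/-- `γ̄_{p m} = γ p_{m1} + (1−γ) p_{m2}`. -/
noncomputable def gbarp (m : Fin 2) : ℝ := M.gam 0 * M.pConn m 0 + M.gam 1 * M.pConn m 1

/-- The denominator `∑_{i' ∈ G₁ ∪ G₂} I_{j,i'}` of the weights of node `j`. -/
noncomputable def denom (n : ℕ) (j : Fin 2 × ℕ) (ω : Ω) : ℝ :=
  ∑ m : Fin 2, ∑ i ∈ Finset.range (M.nsz n m), M.I j (m, i) ω

/-- The random weight `W_{j,i} = I_{j,i} (1 − η_j^{sb}) / ∑_{i'} I_{j,i'}`. -/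
noncomputable def W (n : ℕ) (j i : Fin 2 × ℕ) (ω : Ω) : ℝ :=
  M.I j i ω * (1 - M.ηsb j ω) / M.denom n j ω

/-- `ξ_j^m(x̄, x_b) = f^m(G_j^m, x̄, η_j^{bs} x_b)`. -/
noncomputable def ξ (m : Fin 2) (j : ℕ) (x xb : ℝ) (ω : Ω) : ℝ :=
  M.f m (M.G (m, j) ω) x (M.ηbs (m, j) ω * xb)

/-- Small-node component `f̄_i^{n,m}` of the aggregate operator (zero for `i ≥ n_m`). -/
noncomputable def aggS (n : ℕ) (xb : ℝ) (x : Fin 2 → ℕ → ℝ) (m : Fin 2) (i : ℕ) (ω : Ω) : ℝ :=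
  if i < M.nsz n m then
    ∑ m' : Fin 2, ∑ j ∈ Finset.range (M.nsz n m'),
      M.ξ m' j (x m' j) (M.fb xb) ω * M.W n (m', j) (m, i) ω
  else 0

/-- Big-node component `f̄_b^n` of the aggregate operator. -/
noncomputable def aggB (n : ℕ) (xb : ℝ) (x : Fin 2 → ℕ → ℝ) (ω : Ω) : ℝ :=
  (1 / (n : ℝ)) * ∑ m' : Fin 2, ∑ j ∈ Finset.range (M.nsz n m'),
    M.ξ m' j (x m' j) (M.fb xb) ω * M.ηsb (m', j) ω

/-- Small-node component of the limit operator `f̄^∞` (componentwise `limsup`). -/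
noncomputable def aggSLim (xb : ℝ) (x : Fin 2 → ℕ → ℝ) (m : Fin 2) (i : ℕ) (ω : Ω) : ℝ :=
  Filter.limsup (fun n => M.aggS n xb x m i ω) Filter.atTop

/-- Big-node component of the limit operator `f̄^∞`. -/
noncomputable def aggBLim (xb : ℝ) (x : Fin 2 → ℕ → ℝ) (ω : Ω) : ℝ :=
  Filter.limsup (fun n => M.aggB n xb x ω) Filter.atTop

/-- The event `E` of assumption B.2 (stabilization of normalized neighbour counts). -/
def Bevent : Set Ω :=
  {ω | ∀ m : Fin 2, Tendsto
    (fun n : ℕ => ∑ j ∈ Finset.range (M.nsz n m),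
      |1 / M.denom n (m, j) ω - 1 / ((n : ℝ) * M.gbarp m)|)
    atTop (nhds 0)}

/-- Assumption B.2: `γ̄_{p1}, γ̄_{p2} > 0` and `P(E) = 1`. -/
def B2 : Prop := (∀ m, 0 < M.gbarp m) ∧ M.P M.Bevent = 1

/-- Assumption B.3: the Lipschitz conditions on `f^b` and `f^1, f^2`. -/
def B3 (σ ς : ℝ) : Prop :=
  (∀ x u : ℝ, |M.fb x - M.fb u| ≤ |x - u|) ∧
  ∀ (m : Fin 2) (g x u xb ub ηv : ℝ),
    |M.f m g x (ηv * xb) - M.f m g u (ηv * ub)| ≤ σ * (|x - u| + ς * |xb - ub|)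

/-- Assumption B.4: `ρ ≤ 1`. -/
def B4 : Prop :=
  max (M.gam 0 * M.pConn 0 1 * (1 - M.psb 0) / M.gbarp 0
        + M.gam 1 * M.pConn 1 1 * (1 - M.psb 1) / M.gbarp 1)
      (M.gam 0 * M.pConn 0 0 * (1 - M.psb 0) / M.gbarp 0
        + M.gam 1 * M.pConn 1 0 * (1 - M.psb 1) / M.gbarp 1)
    + (M.gam 0 * M.psb 0 + M.gam 1 * M.psb 1) ≤ 1

/-- `E[ξ^m(x̄, x_b)] = E[f^m(G^m, x̄, η^{bs,m} x_b)]`. -/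
noncomputable def EF (m : Fin 2) (x xb : ℝ) : ℝ :=
  ∫ ω, M.f m (M.G (m, 0) ω) x (M.ηbs (m, 0) ω * xb) ∂M.P

/-- Small-node component of the deterministic three-dimensional limit system. -/
noncomputable def limS3 (xb : ℝ) (x : Fin 2 → ℝ) (m : Fin 2) : ℝ :=
  M.EF 0 (x 0) (M.fb xb) * (M.gam 0 * M.pConn 0 m * (1 - M.psb 0) / M.gbarp 0)
  + M.EF 1 (x 1) (M.fb xb) * (M.gam 1 * M.pConn 1 m * (1 - M.psb 1) / M.gbarp 1)

/-- Big-node component of the deterministic three-dimensional limit system. -/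
noncomputable def limB3 (xb : ℝ) (x : Fin 2 → ℝ) : ℝ :=
  M.gam 0 * M.EF 0 (x 0) (M.fb xb) * M.psb 0
  + M.gam 1 * M.EF 1 (x 1) (M.fb xb) * M.psb 1

/-- Assumption B.5: the limit system has a fixed point among constant sequences,
i.e. the three-dimensional limit system has a solution in `[0,y]³`. -/
def B5 : Prop := ∃ (xb : ℝ) (x : Fin 2 → ℝ),
  xb ∈ Set.Icc 0 M.y ∧ (∀ m, x m ∈ Set.Icc 0 M.y)
  ∧ M.limB3 xb x = xb ∧ ∀ m, M.limS3 xb x m = x m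

end TwoGroupModel

/-!
For a fixed receiver `t`, the contributions `ξ_j I_{j,t} (1 - η^{sb}_j)` of the nodes `j` of one
group are one fixed measurable function of the records `(G_j, η^{bs}_j, I_{j,t}, η^{sb}_j)`,
which are i.i.d.; they are bounded by `y`, so the strong law gives their Cesàro limit
`E[ξ] p_{mt} (1 - p^{sb}_m)`, and similarly for the contributions `ξ_j η^{sb}_j` to the big node.
Since `n_m / n → γ_m`, the same holds for the sums up to `n_m` divided by `n`. The aggregate
operator divides each contribution by the random out-degree of `j` rather than by `n γ̄_{pm}`;
on the event `E` the summed discrepancy of the reciprocals tends to zero, and the boundedness of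
the contributions makes the resulting error vanish.
-/

open Topology

namespace ProbabilityTheory

variable {Ω ι κ β : Type*} [MeasurableSpace Ω] [MeasurableSpace β] {μ : Measure Ω}

lemma iIndepFun.identDistrib_tuple [Fintype κ] {f : ι → Ω → β} (h : iIndepFun f μ)
    (hf : ∀ i, Measurable (f i)) {e e' : κ → ι} (he : e.Injective) (he' : e'.Injective)
    (hid : ∀ k, IdentDistrib (f (e k)) (f (e' k)) μ μ) :
    IdentDistrib (fun ω k => f (e k) ω) (fun ω k => f (e' k) ω) μ μ where
  aemeasurable_fst := (measurable_pi_lambda _ fun k => hf (e k)).aemeasurable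
  aemeasurable_snd := (measurable_pi_lambda _ fun k => hf (e' k)).aemeasurable
  map_eq := by
    rw [(h.precomp he).map_fun_eq_pi_map fun k => (hf (e k)).aemeasurable,
      (h.precomp he').map_fun_eq_pi_map fun k => (hf (e' k)).aemeasurable]
    simp only [fun k => (hid k).map_eq]

lemma iIndepFun.indepFun_tuple_of_disjoint [Fintype κ] {f : ι → Ω → β} (h : iIndepFun f μ)
    (hf : ∀ i, Measurable (f i)) {e e' : κ → ι}
    (hdisj : Disjoint (Set.range e) (Set.range e')) :
    IndepFun (fun ω k => f (e k) ω) (fun ω k => f (e' k) ω) μ := by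
  classical
  have hST : Disjoint (Finset.univ.image e) (Finset.univ.image e') := by
    simpa [← Finset.disjoint_coe] using hdisj
  exact (h.indepFun_finset _ _ hST hf).comp
    (measurable_pi_lambda (fun u k => u ⟨e k, by simp⟩) fun k => measurable_pi_apply _)
    (measurable_pi_lambda (fun u k => u ⟨e' k, by simp⟩) fun k => measurable_pi_apply _)

open Classical in
lemma preimage_eq_of_zero_or_one {α : Type*} {X : α → ℝ} (h01 : ∀ ω, X ω = 0 ∨ X ω = 1)
    (s : Set ℝ) :
    X ⁻¹' s = (if (1 : ℝ) ∈ s then {ω | X ω = 1} else ∅)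
      ∪ (if (0 : ℝ) ∈ s then {ω | X ω = 1}ᶜ else ∅) := by
  have hX : X = {ω | X ω = 1}.indicator fun _ => 1 := by
    funext ω
    rcases h01 ω with h | h <;> simp [h]
  conv_lhs => rw [hX]
  exact Set.indicator_const_preimage_eq_union _ _ _

lemma identDistrib_of_zero_or_one [IsProbabilityMeasure μ] {X Y : Ω → ℝ}
    (hX : Measurable X) (hY : Measurable Y)
    (hX01 : ∀ ω, X ω = 0 ∨ X ω = 1) (hY01 : ∀ ω, Y ω = 0 ∨ Y ω = 1)
    (h : μ {ω | X ω = 1} = μ {ω | Y ω = 1}) : IdentDistrib X Y μ μ := by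
  have hA : MeasurableSet {ω | X ω = 1} := hX (measurableSet_singleton 1)
  have hB : MeasurableSet {ω | Y ω = 1} := hY (measurableSet_singleton 1)
  refine ⟨hX.aemeasurable, hY.aemeasurable, Measure.ext fun s hs => ?_⟩
  rw [Measure.map_apply hX hs, Measure.map_apply hY hs,
    preimage_eq_of_zero_or_one hX01, preimage_eq_of_zero_or_one hY01]
  split_ifs <;> simp [h, prob_compl_eq_one_sub hA, prob_compl_eq_one_sub hB]

lemma integral_eq_measureReal_of_zero_or_one [IsProbabilityMeasure μ] {X : Ω → ℝ}
    (hX : Measurable X) (h01 : ∀ ω, X ω = 0 ∨ X ω = 1) :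
    ∫ ω, X ω ∂μ = μ.real {ω | X ω = 1} := by
  have hXA : X = {ω | X ω = 1}.indicator 1 := by
    funext ω
    rcases h01 ω with h | h <;> simp [h]
  conv_lhs => rw [hXA]
  exact integral_indicator_one (hX (measurableSet_singleton 1))

theorem strong_law_ae_real_comp {E : Type*} [MeasurableSpace E] {V : ℕ → Ω → E}
    (hindep : Pairwise fun j k => IndepFun (V j) (V k) μ)
    (hident : ∀ j, IdentDistrib (V j) (V 0) μ μ) {Φ : E → ℝ} (hΦ : Measurable Φ)
    (hint : Integrable (fun ω => Φ (V 0 ω)) μ) :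
    ∀ᵐ ω ∂μ, Tendsto (fun n : ℕ => (∑ j ∈ Finset.range n, Φ (V j ω)) / n) atTop
      (𝓝 (∫ ω, Φ (V 0 ω) ∂μ)) :=
  strong_law_ae_real (fun j ω => Φ (V j ω)) hint
    (fun _ _ hjk => (hindep hjk).comp hΦ hΦ) fun j => (hident j).comp hΦ

end ProbabilityTheory

lemma tendsto_atTop_of_tendsto_div_natCast {k : ℕ → ℕ} {g : ℝ} (hg : 0 < g)
    (h : Tendsto (fun n : ℕ => (k n : ℝ) / n) atTop (𝓝 g)) : Tendsto k atTop atTop := by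
  rw [← tendsto_natCast_atTop_iff (R := ℝ)]
  refine (h.pos_mul_atTop hg tendsto_natCast_atTop_atTop).congr' ?_
  filter_upwards [eventually_ne_atTop 0] with n hn
  field_simp

lemma Filter.Tendsto.sum_range_comp_div {X : ℕ → ℝ} {L g : ℝ} {k : ℕ → ℕ}
    (hX : Tendsto (fun n : ℕ => (∑ j ∈ Finset.range n, X j) / n) atTop (𝓝 L))
    (hk : Tendsto k atTop atTop) (hkg : Tendsto (fun n : ℕ => (k n : ℝ) / n) atTop (𝓝 g)) :
    Tendsto (fun n : ℕ => (∑ j ∈ Finset.range (k n), X j) / n) atTop (𝓝 (g * L)) := by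
  refine (hkg.mul (hX.comp hk)).congr fun n => ?_
  rcases eq_or_ne (k n : ℝ) 0 with h0 | h0
  · simp [Function.comp_apply, show k n = 0 by exact_mod_cast h0]
  · simp only [Function.comp_apply]
    field_simp

lemma tendsto_sum_mul_of_abs_le_of_sum_abs {s : ℕ → Finset ℕ} {a b : ℕ → ℕ → ℝ} {C : ℝ}
    (ha : ∀ n j, |a n j| ≤ C)
    (hb : Tendsto (fun n => ∑ j ∈ s n, |b n j|) atTop (𝓝 0)) :
    Tendsto (fun n => ∑ j ∈ s n, a n j * b n j) atTop (𝓝 0) := by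
  refine squeeze_zero_norm (fun n => ?_) (by simpa using hb.const_mul C)
  calc ‖∑ j ∈ s n, a n j * b n j‖ ≤ ∑ j ∈ s n, |a n j| * |b n j| := by
        simpa [abs_mul] using norm_sum_le (s n) fun j => a n j * b n j
    _ ≤ ∑ j ∈ s n, C * |b n j| :=
        Finset.sum_le_sum fun j _ => mul_le_mul_of_nonneg_right (ha n j) (abs_nonneg _)
    _ = C * ∑ j ∈ s n, |b n j| := (Finset.mul_sum _ _ _).symm

lemma tendsto_sum_range_div_of_sum_abs_inv_sub {X : ℕ → ℝ} {D : ℕ → ℕ → ℝ} {k : ℕ → ℕ}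
    {C L g c : ℝ}
    (hX : Tendsto (fun n : ℕ => (∑ j ∈ Finset.range n, X j) / n) atTop (𝓝 L))
    (hXC : ∀ j, |X j| ≤ C)
    (hk : Tendsto k atTop atTop) (hkg : Tendsto (fun n : ℕ => (k n : ℝ) / n) atTop (𝓝 g))
    (hD : Tendsto (fun n : ℕ => ∑ j ∈ Finset.range (k n), |1 / D n j - 1 / (n * c)|)
      atTop (𝓝 0)) :
    Tendsto (fun n : ℕ => ∑ j ∈ Finset.range (k n), X j / D n j) atTop (𝓝 (g * L / c)) := by
  have herr := tendsto_sum_mul_of_abs_le_of_sum_abs (a := fun _ j => X j) (fun _ j => hXC j) hD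
  have hmain := (hX.sum_range_comp_div hk hkg).const_mul c⁻¹
  rw [show g * L / c = 0 + c⁻¹ * (g * L) by ring]
  refine (herr.add hmain).congr fun n => ?_
  rw [Finset.sum_div, Finset.mul_sum, ← Finset.sum_add_distrib]
  exact Finset.sum_congr rfl fun j _ => by ring

lemma abs_mul_le_of_mem_Icc_of_mem_unitInterval {a b y : ℝ} (ha : a ∈ Set.Icc 0 y)
    (hb : b ∈ unitInterval) : |a * b| ≤ y := by
  rw [abs_of_nonneg (mul_nonneg ha.1 hb.1)]
  exact (mul_le_of_le_one_right ha.1 hb.2).trans ha.2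

namespace TwoGroupModel

variable {Ω : Type} [MeasurableSpace Ω] (M : TwoGroupModel Ω)

abbrev VarIdx : Type := ((Fin 2 × ℕ) × (Fin 2 × ℕ)) ⊕ (Fin 2 × ℕ) ⊕ (Fin 2 × ℕ) ⊕ (Fin 2 × ℕ)

def vars : VarIdx → Ω → ℝ :=
  Sum.elim (fun q => M.I q.1 q.2) (Sum.elim M.ηsb (Sum.elim M.ηbs M.G))

lemma iIndepFun_vars : iIndepFun M.vars M.P := M.indep

lemma measurable_vars : ∀ q, Measurable (M.vars q)
  | .inl (j, i) => M.measI j i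
  | .inr (.inl j) => M.measηsb j
  | .inr (.inr (.inl j)) => M.measηbs j
  | .inr (.inr (.inr j)) => M.measG j

/-- Positions in `vars` of `(G_j, η^{bs}_j, I_{j,t}, η^{sb}_j)`, the data that determine what
node `j` sends to node `t`. -/
def nodeIdx (t j : Fin 2 × ℕ) : Fin 4 → VarIdx :=
  ![.inr (.inr (.inr j)), .inr (.inr (.inl j)), .inl (j, t), .inr (.inl j)]

def nodeVec (t j : Fin 2 × ℕ) (ω : Ω) : Fin 4 → ℝ := fun k => M.vars (nodeIdx t j k) ω

lemma nodeIdx_injective (t j : Fin 2 × ℕ) : (nodeIdx t j).Injective := by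
  intro a b
  fin_cases a <;> fin_cases b <;> simp [nodeIdx]

lemma disjoint_range_nodeIdx {t j j' : Fin 2 × ℕ} (h : j ≠ j') :
    Disjoint (Set.range (nodeIdx t j)) (Set.range (nodeIdx t j')) := by
  simp [Set.disjoint_left, nodeIdx, h]

lemma indepFun_nodeVec (t : Fin 2 × ℕ) {j j' : Fin 2 × ℕ} (h : j ≠ j') :
    IndepFun (M.nodeVec t j) (M.nodeVec t j') M.P :=
  M.iIndepFun_vars.indepFun_tuple_of_disjoint M.measurable_vars (disjoint_range_nodeIdx h)

lemma identDistrib_I (m : Fin 2) (j : ℕ) (t : Fin 2 × ℕ) :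
    IdentDistrib (M.I (m, j) t) (M.I (m, 0) t) M.P M.P := by
  have := M.isProb
  exact identDistrib_of_zero_or_one (M.measI _ _) (M.measI _ _) (M.I01 _ _) (M.I01 _ _)
    (by rw [M.Idist, M.Idist])

lemma identDistrib_nodeVec (m : Fin 2) (j : ℕ) (t : Fin 2 × ℕ) :
    IdentDistrib (M.nodeVec t (m, j)) (M.nodeVec t (m, 0)) M.P M.P :=
  M.iIndepFun_vars.identDistrib_tuple M.measurable_vars (nodeIdx_injective _ _)
    (nodeIdx_injective _ _) fun k => by
      fin_cases k
      exacts [M.GIdent m j, M.ηbsIdent m j, M.identDistrib_I m j t, M.ηsbIdent m j]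

def smallSummand (m : Fin 2) (x xb : ℝ) (v : Fin 4 → ℝ) : ℝ :=
  M.f m (v 0) x (v 1 * xb) * (v 2 * (1 - v 3))

def bigSummand (m : Fin 2) (x xb : ℝ) (v : Fin 4 → ℝ) : ℝ :=
  M.f m (v 0) x (v 1 * xb) * v 3

lemma measurable_f_comp (m : Fin 2) (x xb : ℝ) :
    Measurable fun p : ℝ × ℝ => M.f m p.1 x (p.2 * xb) :=
  (M.hfCont m).measurable.comp (f := fun p : ℝ × ℝ => (p.1, x, p.2 * xb)) (by fun_prop)

lemma measurable_ξ (m : Fin 2) (j : ℕ) (x xb : ℝ) : Measurable (M.ξ m j x xb) :=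
  (M.measurable_f_comp m x xb).comp ((M.measG _).prodMk (M.measηbs _))

lemma measurable_smallSummand (m : Fin 2) (x xb : ℝ) : Measurable (M.smallSummand m x xb) :=
  ((M.measurable_f_comp m x xb).comp (f := fun v : Fin 4 → ℝ => (v 0, v 1)) (by fun_prop)).mul
    (g := fun v : Fin 4 → ℝ => v 2 * (1 - v 3)) (by fun_prop)

lemma measurable_bigSummand (m : Fin 2) (x xb : ℝ) : Measurable (M.bigSummand m x xb) :=
  ((M.measurable_f_comp m x xb).comp (f := fun v : Fin 4 → ℝ => (v 0, v 1)) (by fun_prop)).mul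
    (g := fun v : Fin 4 → ℝ => v 3) (by fun_prop)

lemma I_mem_unitInterval (j t : Fin 2 × ℕ) (ω : Ω) : M.I j t ω ∈ unitInterval := by
  rcases M.I01 j t ω with h | h <;> simp [h]

lemma abs_smallSummand_nodeVec_le (m : Fin 2) (x xb : ℝ) (t j : Fin 2 × ℕ) (ω : Ω) :
    |M.smallSummand m x xb (M.nodeVec t j ω)| ≤ M.y :=
  abs_mul_le_of_mem_Icc_of_mem_unitInterval (M.hfRange _ _ _ _) <|
    unitInterval.mul_mem (M.I_mem_unitInterval j t ω)
      (Set.Icc.mem_iff_one_sub_mem.mp (M.ηsbRange j ω))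

lemma abs_bigSummand_nodeVec_le (m : Fin 2) (x xb : ℝ) (t j : Fin 2 × ℕ) (ω : Ω) :
    |M.bigSummand m x xb (M.nodeVec t j ω)| ≤ M.y :=
  abs_mul_le_of_mem_Icc_of_mem_unitInterval (M.hfRange _ _ _ _) (M.ηsbRange j ω)

lemma integral_I (m : Fin 2) (j : ℕ) (t : Fin 2 × ℕ) :
    ∫ ω, M.I (m, j) t ω ∂M.P = M.pConn m t.1 := by
  have := M.isProb
  rw [integral_eq_measureReal_of_zero_or_one (M.measI _ _) (M.I01 _ _), measureReal_def,
    M.Idist, ENNReal.toReal_ofReal]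
  · rfl
  · split_ifs
    exacts [(M.hp m).1, (M.hpc m).1]

lemma integral_smallSummand (m : Fin 2) (x xb : ℝ) (t : Fin 2 × ℕ) :
    ∫ ω, M.smallSummand m x xb (M.nodeVec t (m, 0) ω) ∂M.P
      = M.EF m x xb * (M.pConn m t.1 * (1 - M.psb m)) := by
  have := M.isProb
  have hV := M.iIndepFun_vars.precomp (nodeIdx_injective t (m, 0))
  have hVmeas : ∀ k, Measurable (M.vars (nodeIdx t (m, 0) k)) := fun k => M.measurable_vars _
  have hξ : IndepFun (M.ξ m 0 x xb)
      (fun ω => M.I (m, 0) t ω * (1 - M.ηsb (m, 0) ω)) M.P :=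
    (hV.indepFun_prodMk_prodMk hVmeas 0 1 2 3 (by decide) (by decide) (by decide)
      (by decide)).comp (M.measurable_f_comp m x xb)
      (show Measurable fun p : ℝ × ℝ => p.1 * (1 - p.2) by fun_prop)
  have hI : IndepFun (M.I (m, 0) t) (fun ω => 1 - M.ηsb (m, 0) ω) M.P :=
    (hV.indepFun (i := 2) (j := 3) (by decide)).comp measurable_id
      (show Measurable fun r : ℝ => 1 - r by fun_prop)
  have hηsb : Integrable (M.ηsb (m, 0)) M.P :=
    .of_bound (M.measηsb _).aestronglyMeasurable 1 <| ae_of_all _ fun ω =>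
      abs_le.2 ⟨by linarith [(M.ηsbRange (m, 0) ω).1], (M.ηsbRange (m, 0) ω).2⟩
  calc ∫ ω, M.smallSummand m x xb (M.nodeVec t (m, 0) ω) ∂M.P
      = M.EF m x xb * ((∫ ω, M.I (m, 0) t ω ∂M.P) * ∫ ω, 1 - M.ηsb (m, 0) ω ∂M.P) := by
        rw [← hI.integral_fun_mul_eq_mul_integral (M.measI _ _).aestronglyMeasurable
          (by fun_prop)]
        exact hξ.integral_fun_mul_eq_mul_integral (M.measurable_ξ m 0 x xb).aestronglyMeasurable
          ((M.measI _ _).mul (measurable_const.sub (M.measηsb _))).aestronglyMeasurable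
    _ = M.EF m x xb * (M.pConn m t.1 * (1 - M.psb m)) := by
        rw [M.integral_I, integral_sub (integrable_const 1) hηsb, M.ηsbMean]
        simp

lemma integral_bigSummand (m : Fin 2) (x xb : ℝ) (t : Fin 2 × ℕ) :
    ∫ ω, M.bigSummand m x xb (M.nodeVec t (m, 0) ω) ∂M.P = M.EF m x xb * M.psb m := by
  have hV := M.iIndepFun_vars.precomp (nodeIdx_injective t (m, 0))
  have hξ : IndepFun (M.ξ m 0 x xb) (M.ηsb (m, 0)) M.P :=
    (hV.indepFun_prodMk (fun k => M.measurable_vars _) 0 1 3 (by decide) (by decide)).comp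
      (M.measurable_f_comp m x xb) measurable_id
  rw [← M.ηsbMean m 0]
  exact hξ.integral_fun_mul_eq_mul_integral (M.measurable_ξ m 0 x xb).aestronglyMeasurable
    (M.measηsb _).aestronglyMeasurable

lemma ae_tendsto_nodeVec (m : Fin 2) (t : Fin 2 × ℕ) {Φ : (Fin 4 → ℝ) → ℝ} {C : ℝ}
    (hΦ : Measurable Φ) (hC : ∀ ω, |Φ (M.nodeVec t (m, 0) ω)| ≤ C) :
    ∀ᵐ ω ∂M.P, Tendsto (fun n : ℕ => (∑ j ∈ Finset.range n, Φ (M.nodeVec t (m, j) ω)) / n)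
      atTop (𝓝 (∫ ω, Φ (M.nodeVec t (m, 0) ω) ∂M.P)) := by
  have := M.isProb
  refine strong_law_ae_real_comp (fun j k hjk => M.indepFun_nodeVec t (by simpa using hjk))
    (fun j => M.identDistrib_nodeVec m j t) hΦ ?_
  exact .of_bound
    (hΦ.comp (measurable_pi_lambda _ fun k => M.measurable_vars _)).aestronglyMeasurable C
    (ae_of_all _ hC)

lemma ae_tendsto_smallSummand (m : Fin 2) (x xb : ℝ) (t : Fin 2 × ℕ) :
    ∀ᵐ ω ∂M.P, Tendsto
      (fun n : ℕ => (∑ j ∈ Finset.range n, M.smallSummand m x xb (M.nodeVec t (m, j) ω)) / n)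
      atTop (𝓝 (M.EF m x xb * (M.pConn m t.1 * (1 - M.psb m)))) := by
  rw [← M.integral_smallSummand]
  exact M.ae_tendsto_nodeVec m t (M.measurable_smallSummand m x xb)
    (M.abs_smallSummand_nodeVec_le m x xb t (m, 0))

lemma ae_tendsto_bigSummand (m : Fin 2) (x xb : ℝ) (t : Fin 2 × ℕ) :
    ∀ᵐ ω ∂M.P, Tendsto
      (fun n : ℕ => (∑ j ∈ Finset.range n, M.bigSummand m x xb (M.nodeVec t (m, j) ω)) / n)
      atTop (𝓝 (M.EF m x xb * M.psb m)) := by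
  rw [← M.integral_bigSummand m x xb t]
  exact M.ae_tendsto_nodeVec m t (M.measurable_bigSummand m x xb)
    (M.abs_bigSummand_nodeVec_le m x xb t (m, 0))

lemma gam_pos (m : Fin 2) : 0 < M.gam m := by
  unfold gam
  split_ifs
  exacts [M.hγ.1, sub_pos.2 M.hγ.2]

lemma tendsto_nsz_div (m : Fin 2) :
    Tendsto (fun n : ℕ => (M.nsz n m : ℝ) / n) atTop (𝓝 (M.gam m)) := by
  have hfloor : Tendsto (fun n : ℕ => (⌊M.γ * n⌋₊ : ℝ) / n) atTop (𝓝 M.γ) :=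
    (tendsto_nat_floor_mul_div_atTop M.hγ.1.le).comp tendsto_natCast_atTop_atTop
  fin_cases m
  · exact hfloor
  · refine (tendsto_const_nhds.sub hfloor).congr' ?_
    filter_upwards [eventually_ne_atTop 0] with n hn
    have hle : ⌊M.γ * n⌋₊ ≤ n :=
      Nat.floor_le_of_le (mul_le_of_le_one_left n.cast_nonneg M.hγ.2.le)
    simp [nsz, Nat.cast_sub hle, sub_div, hn]

lemma tendsto_nsz_atTop (m : Fin 2) : Tendsto (fun n => M.nsz n m) atTop atTop :=
  tendsto_atTop_of_tendsto_div_natCast (M.gam_pos m) (M.tendsto_nsz_div m)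

lemma measurableSet_Bevent : MeasurableSet M.Bevent := by
  simp only [Bevent, Set.ofPred_forall]
  refine .iInter fun m => measurableSet_tendsto _ fun n => ?_
  refine Finset.measurable_sum _ fun j _ => ((Measurable.const_div ?_ 1).sub_const _).abs
  exact Finset.measurable_sum _ fun m' _ => Finset.measurable_sum _ fun i _ => M.measI _ _

lemma ae_mem_Bevent (h : M.P M.Bevent = 1) : ∀ᵐ ω ∂M.P, ω ∈ M.Bevent := by
  have := M.isProb
  exact (ae_iff_measure_eq M.measurableSet_Bevent.nullMeasurableSet).2
    (h.trans measure_univ.symm)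

lemma ξ_mul_W (m : Fin 2) (j n : ℕ) (x xb : ℝ) (t : Fin 2 × ℕ) (ω : Ω) :
    M.ξ m j x xb ω * M.W n (m, j) t ω
      = M.smallSummand m x xb (M.nodeVec t (m, j) ω) / M.denom n (m, j) ω :=
  (mul_div_assoc ..).symm

lemma tendsto_aggS {xb : ℝ} {c : Fin 2 → ℝ} {m : Fin 2} {i : ℕ} {ω : Ω} (hE : ω ∈ M.Bevent)
    (hlln : ∀ m', Tendsto (fun n : ℕ => (∑ j ∈ Finset.range n,
        M.smallSummand m' (c m') (M.fb xb) (M.nodeVec (m, i) (m', j) ω)) / n)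
      atTop (𝓝 (M.EF m' (c m') (M.fb xb) * (M.pConn m' m * (1 - M.psb m'))))) :
    Tendsto (fun n => M.aggS n xb (fun m' _ => c m') m i ω) atTop (𝓝 (M.limS3 xb c m)) := by
  have hgroup := fun m' => tendsto_sum_range_div_of_sum_abs_inv_sub (hlln m')
    (fun j => M.abs_smallSummand_nodeVec_le m' _ _ _ _ ω) (M.tendsto_nsz_atTop m')
    (M.tendsto_nsz_div m') (hE m')
  have hlim : M.limS3 xb c m = ∑ m', M.gam m' *
      (M.EF m' (c m') (M.fb xb) * (M.pConn m' m * (1 - M.psb m'))) / M.gbarp m' := by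
    simp only [limS3, Fin.sum_univ_two]
    ring
  rw [hlim]
  refine (tendsto_finsetSum _ fun m' _ => hgroup m').congr' ?_
  filter_upwards [(M.tendsto_nsz_atTop m).eventually_gt_atTop i] with n hn
  simp only [aggS, if_pos hn, ξ_mul_W]

lemma tendsto_aggB {xb : ℝ} {c : Fin 2 → ℝ} (t : Fin 2 × ℕ) {ω : Ω}
    (hlln : ∀ m', Tendsto (fun n : ℕ => (∑ j ∈ Finset.range n,
        M.bigSummand m' (c m') (M.fb xb) (M.nodeVec t (m', j) ω)) / n)
      atTop (𝓝 (M.EF m' (c m') (M.fb xb) * M.psb m'))) :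
    Tendsto (fun n => M.aggB n xb (fun m' _ => c m') ω) atTop (𝓝 (M.limB3 xb c)) := by
  have hlim : M.limB3 xb c = ∑ m', M.gam m' * (M.EF m' (c m') (M.fb xb) * M.psb m') := by
    simp only [limB3, Fin.sum_univ_two]
    ring
  rw [hlim]
  refine (tendsto_finsetSum _ fun m' _ =>
    (hlln m').sum_range_comp_div (M.tendsto_nsz_atTop m') (M.tendsto_nsz_div m')).congr
    fun n => ?_
  simp only [aggB, Finset.mul_sum, one_div_mul_eq_div, Finset.sum_div]
  rfl

end TwoGroupModel

open TwoGroupModel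

theorem aggregate_converges_on_constant_sequences_general
    {Ω : Type} [MeasurableSpace Ω] (M : TwoGroupModel Ω)
    (hB2 : M.B2)
    (xb : ℝ) (c : Fin 2 → ℝ) :
    ∀ᵐ ω ∂M.P,
      (∀ (m : Fin 2) (i : ℕ),
        Tendsto (fun n : ℕ => M.aggS n xb (fun m' _ => c m') m i ω) atTop
          (nhds (M.limS3 xb c m)))
      ∧ Tendsto (fun n : ℕ => M.aggB n xb (fun m' _ => c m') ω) atTop
          (nhds (M.limB3 xb c)) := by
  have hsmall := ae_all_iff.2 fun m' => ae_all_iff.2 fun t =>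
    M.ae_tendsto_smallSummand m' (c m') (M.fb xb) t
  -- `bigSummand` ignores the edge coordinate, so the receiver `(0, 0)` is arbitrary.
  have hbig := ae_all_iff.2 fun m' => M.ae_tendsto_bigSummand m' (c m') (M.fb xb) (0, 0)
  filter_upwards [M.ae_mem_Bevent hB2.2, hsmall, hbig] with ω hE hS hB
  exact ⟨fun m i => M.tendsto_aggS hE fun m' => hS m' (m, i), M.tendsto_aggB (0, 0) hB⟩

/-- **Convergence of the aggregate operators on constant sequences (Lemma 2).**
Under B.1 and B.2, for fixed constants `x̄¹, x̄², x̄_b ∈ [0,y]`, almost surely the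
aggregate operators converge, for every group `m` and node `i`, to the deterministic
limits of the three-dimensional limit system. -/
theorem aggregate_converges_on_constant_sequences
    {Ω : Type} [MeasurableSpace Ω] (M : TwoGroupModel Ω)
    (hB2 : M.B2)
    (xb : ℝ) (c : Fin 2 → ℝ)
    (hxb : xb ∈ Set.Icc 0 M.y) (hc : ∀ m, c m ∈ Set.Icc 0 M.y) :
    ∀ᵐ ω ∂M.P,
      (∀ (m : Fin 2) (i : ℕ),
        Tendsto (fun n : ℕ => M.aggS n xb (fun m' _ => c m') m i ω) atTop
          (nhds (M.limS3 xb c m)))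
      ∧ Tendsto (fun n : ℕ => M.aggB n xb (fun m' _ => c m') ω) atTop
          (nhds (M.limB3 xb c)) :=
  aggregate_converges_on_constant_sequences_general M hB2 xb c
end

section
/- Let n ≥ 1, let σ, ς ∈ (0,1], and let η̲ ∈ [0,1]. For each j ∈ {1,…,n} let η_j ∈ [η̲, 1], let (W_{j,i})_{i=1}^n be nonnegative reals with Σ_{i=1}^n W_{j,i} = 1 − η_j, and let ξ_j : ℝ × ℝ → ℝ satisfy |ξ_j(x, x_b) − ξ_j(u, u_b)| ≤ σ(|x − u| + ς|x_b − u_b|) for all x, u, x_b, u_b. Define F : ℝ^{n+1} → ℝ^{n+1}, acting on vectors (x_b, x_1, …, x_n), by F_i(x_b, x) := Σ_{j=1}^n ξ_j(x_j, x_b) W_{j,i} for i = 1,…,n and F_b(x_b, x) := (1/n) Σ_{j=1}^n ξ_j(x_j, x_b) η_j, and the norm ‖(x_b, x)‖_1 := (1/n) Σ_{j=1}^n (|x_j| + ς|x_b|). Then ‖F(x_b, x) − F(u_b, u)‖_1 ≤ σ(1 − η̲ + ς η̲) ‖(x_b, x) − (u_b, u)‖_1 for all (x_b, x), (u_b, u)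 ∈ ℝ^{n+1}. Consequently, if σ(1 − η̲ + ς η̲) < 1, then F has a unique fixed point. -/
/-!
With `Δₖ = ξₖ(xₖ, x_b) - ξₖ(uₖ, u_b)`, the triangle inequality and the row sums
`∑ᵢ W_{k,i} = 1 - ηₖ` bound the weighted distance of the images by
`(1/n) ∑ₖ |Δₖ| (1 - ηₖ + ς ηₖ)`, and `1 - ηₖ + ς ηₖ ≤ 1 - η̲ + ς η̲` because `ς ≤ 1`.
The weighted distance is comparable to the sup metric of `ℝ × ℝⁿ`, so some iterate of `F` is
a contraction for the sup metric, and Banach's theorem gives the unique fixed point.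
-/

open Finset Function

section FixedPoint

variable {α : Type*} {f : α → α} {d : α → α → ℝ} {K : ℝ}

theorem iterate_le_pow_mul (hK : 0 ≤ K) (hf : ∀ p q, d (f p) (f q) ≤ K * d p q) (m : ℕ)
    (p q : α) :
    d (f^[m] p) (f^[m] q) ≤ K ^ m * d p q := by
  induction m generalizing p q with
  | zero => simp
  | succ m ih =>
    calc d (f^[m] (f p)) (f^[m] (f q)) ≤ K ^ m * d (f p) (f q) := ih _ _
      _ ≤ K ^ m * (K * d p q) := by gcongr; exact hf p q
      _ = K ^ (m + 1) * d p q := by ring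

variable [MetricSpace α] {a b : ℝ}

theorem exists_contractingWith_iterate_of_le_mul (hK0 : 0 ≤ K) (hK : K < 1) (hb : 0 ≤ b)
    (hd : ∀ p q, d p q ≤ a * dist p q) (hdist : ∀ p q, dist p q ≤ b * d p q)
    (hf : ∀ p q, d (f p) (f q) ≤ K * d p q) :
    ∃ (m : ℕ) (L : NNReal), ContractingWith L f^[m] := by
  have hlim : Filter.Tendsto (fun m : ℕ => b * a * K ^ m) Filter.atTop (nhds 0) := by
    simpa using (tendsto_pow_atTop_nhds_zero_of_lt_one hK0 hK).const_mul (b * a)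
  obtain ⟨m, hm⟩ := (hlim.eventually (gt_mem_nhds zero_lt_one)).exists
  refine ⟨m, (b * a * K ^ m).toNNReal, by simpa using hm, LipschitzWith.of_dist_le_mul ?_⟩
  intro p q
  calc dist (f^[m] p) (f^[m] q) ≤ b * d (f^[m] p) (f^[m] q) := hdist _ _
    _ ≤ b * (K ^ m * (a * dist p q)) := by
        gcongr
        exact (iterate_le_pow_mul hK0 hf m p q).trans (by gcongr; exact hd p q)
    _ = b * a * K ^ m * dist p q := by ring
    _ ≤ _ := by rw [Real.coe_toNNReal']; gcongr; exact le_max_left _ _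

theorem exists_unique_isFixedPt_of_le_mul [CompleteSpace α] [Nonempty α] (hK0 : 0 ≤ K)
    (hK : K < 1) (hb : 0 ≤ b) (hd : ∀ p q, d p q ≤ a * dist p q)
    (hdist : ∀ p q, dist p q ≤ b * d p q) (hf : ∀ p q, d (f p) (f q) ≤ K * d p q) :
    ∃! p, IsFixedPt f p := by
  obtain ⟨m, L, hL⟩ := exists_contractingWith_iterate_of_le_mul hK0 hK hb hd hdist hf
  exact ⟨_, ContractingWith.isFixedPt_fixedPoint_iterate hL,
    fun q hq => hL.fixedPoint_unique (hq.iterate m)⟩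

end FixedPoint

theorem abs_sum_mul_le_sum_abs_mul {ι : Type*} (s : Finset ι) (f w : ι → ℝ)
    (hw : ∀ i ∈ s, 0 ≤ w i) : |∑ i ∈ s, f i * w i| ≤ ∑ i ∈ s, |f i| * w i :=
  (abs_sum_le_sum_abs _ _).trans_eq <|
    sum_congr rfl fun i hi => by rw [abs_mul, abs_of_nonneg (hw i hi)]

noncomputable def aggregateMap {n : ℕ} (ξ : Fin n → ℝ → ℝ → ℝ) (η : Fin n → ℝ)
    (W : Fin n → Fin n → ℝ) (p : ℝ × (Fin n → ℝ)) : ℝ × (Fin n → ℝ) :=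
  ((1 / (n : ℝ)) * ∑ k, ξ k (p.2 k) p.1 * η k, fun i => ∑ k, ξ k (p.2 k) p.1 * W k i)

noncomputable def aggregateDist {n : ℕ} (ς : ℝ) (p q : ℝ × (Fin n → ℝ)) : ℝ :=
  (1 / (n : ℝ)) * ∑ j, (|p.2 j - q.2 j| + ς * |p.1 - q.1|)

section Aggregate

variable {n : ℕ} {ξ : Fin n → ℝ → ℝ → ℝ} {η : Fin n → ℝ} {W : Fin n → Fin n → ℝ}

theorem aggregateDist_eq (hn : n ≠ 0) (ς : ℝ) (p q : ℝ × (Fin n → ℝ)) :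
    aggregateDist ς p q = (1 / (n : ℝ)) * ∑ j, |p.2 j - q.2 j| + ς * |p.1 - q.1| := by
  have : (n : ℝ) ≠ 0 := by exact_mod_cast hn
  simp only [aggregateDist, sum_add_distrib, sum_const, card_univ, Fintype.card_fin,
    nsmul_eq_mul]
  field_simp

theorem aggregateDist_le_mul_dist (hn : n ≠ 0) {ς : ℝ} (hς : 0 ≤ ς) (p q : ℝ × (Fin n → ℝ)) :
    aggregateDist ς p q ≤ (1 + ς) * dist p q := by
  have hsmall : ∀ j, |p.2 j - q.2 j| ≤ dist p q := fun j =>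
    (dist_le_pi_dist p.2 q.2 j).trans (le_max_right _ _)
  have hbig : |p.1 - q.1| ≤ dist p q := le_max_left _ _
  calc aggregateDist ς p q ≤ (1 / (n : ℝ)) * ∑ _j : Fin n, (1 + ς) * dist p q := by
        unfold aggregateDist
        gcongr with j
        linarith [hsmall j, mul_le_mul_of_nonneg_left hbig hς]
    _ = (1 + ς) * dist p q := by simp [hn]

theorem dist_le_mul_aggregateDist (hn : n ≠ 0) {ς : ℝ} (hς : 0 < ς) (p q : ℝ × (Fin n → ℝ)) :
    dist p q ≤ (n + ς⁻¹) * aggregateDist ς p q := by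
  have hn' : (0 : ℝ) < n := by positivity
  have hsmall : ∀ j, |p.2 j - q.2 j| ≤ n * aggregateDist ς p q := fun j => by
    rw [aggregateDist_eq hn, mul_add, ← mul_assoc, mul_one_div_cancel hn'.ne', one_mul]
    have := single_le_sum (fun i _ => abs_nonneg (p.2 i - q.2 i)) (mem_univ j)
    linarith [mul_nonneg hn'.le (mul_nonneg hς.le (abs_nonneg (p.1 - q.1)))]
  have hbig : |p.1 - q.1| ≤ ς⁻¹ * aggregateDist ς p q := by
    rw [aggregateDist_eq hn, le_inv_mul_iff₀ hς]
    have : 0 ≤ 1 / (n : ℝ) * ∑ j, |p.2 j - q.2 j| := by positivity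
    linarith
  have hD : 0 ≤ aggregateDist ς p q := by unfold aggregateDist; positivity
  refine max_le (hbig.trans ?_) ((dist_pi_le_iff (by positivity)).2 fun j => ?_)
  · gcongr; linarith
  · rw [Real.dist_eq]; refine (hsmall j).trans ?_; gcongr; linarith [inv_pos.2 hς]

theorem aggregateDist_aggregateMap_le (hn : n ≠ 0) {σ ς ηlb : ℝ} (hς0 : 0 ≤ ς) (hς1 : ς ≤ 1)
    (hηlb : 0 ≤ ηlb) (hη : ∀ j, η j ∈ Set.Icc ηlb 1) (hW : ∀ j i, 0 ≤ W j i)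
    (hWsum : ∀ j, ∑ i, W j i = 1 - η j)
    (hξ : ∀ j x u xb ub, |ξ j x xb - ξ j u ub| ≤ σ * (|x - u| + ς * |xb - ub|))
    (p q : ℝ × (Fin n → ℝ)) :
    aggregateDist ς (aggregateMap ξ η W p) (aggregateMap ξ η W q)
      ≤ σ * (1 - ηlb + ς * ηlb) * aggregateDist ς p q := by
  set Δ : Fin n → ℝ := fun k => ξ k (p.2 k) p.1 - ξ k (q.2 k) q.1
  have hη0 : ∀ k, 0 ≤ η k := fun k => hηlb.trans (hη k).1
  have hsmall : ∀ i, (aggregateMap ξ η W p).2 i - (aggregateMap ξ η W q).2 i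
      = ∑ k, Δ k * W k i := fun i => by
    simp only [aggregateMap, Δ, ← sum_sub_distrib, sub_mul]
  have hbig : (aggregateMap ξ η W p).1 - (aggregateMap ξ η W q).1
      = 1 / (n : ℝ) * ∑ k, Δ k * η k := by
    simp only [aggregateMap, Δ, ← mul_sub, ← sum_sub_distrib, sub_mul]
  have hmass : ∑ i, ∑ k, |Δ k| * W k i = ∑ k, |Δ k| * (1 - η k) := by
    rw [sum_comm]; simp_rw [← mul_sum, hWsum]
  -- `1 - η + ςη = 1 - (1 - ς)η` is antitone in `η`, since `ς ≤ 1`.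
  have hfactor : ∀ k, |Δ k| * (1 - η k + ς * η k)
      ≤ σ * (|p.2 k - q.2 k| + ς * |p.1 - q.1|) * (1 - ηlb + ς * ηlb) := fun k => by
    have hmono : 1 - η k + ς * η k ≤ 1 - ηlb + ς * ηlb := by nlinarith [(hη k).1]
    have hpos : 0 ≤ 1 - η k + ς * η k := by nlinarith [(hη k).2, hη0 k]
    exact mul_le_mul (hξ k _ _ _ _) hmono hpos ((abs_nonneg _).trans (hξ k _ _ _ _))
  calc aggregateDist ς (aggregateMap ξ η W p) (aggregateMap ξ η W q)
      = 1 / (n : ℝ) * ∑ i, |∑ k, Δ k * W k i| + ς * |1 / (n : ℝ) * ∑ k, Δ k * η k| := by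
        simp only [aggregateDist_eq hn, hsmall, hbig]
    _ ≤ 1 / (n : ℝ) * ∑ i, ∑ k, |Δ k| * W k i + ς * (1 / (n : ℝ) * ∑ k, |Δ k| * η k) := by
        rw [abs_mul, abs_of_nonneg (by positivity : (0 : ℝ) ≤ 1 / n)]
        gcongr with i
        · exact abs_sum_mul_le_sum_abs_mul _ _ _ fun k _ => hW k i
        · exact abs_sum_mul_le_sum_abs_mul _ _ _ fun k _ => hη0 k
    _ = 1 / (n : ℝ) * ∑ k, |Δ k| * (1 - η k + ς * η k) := by
        rw [hmass]
        simp only [mul_sum, ← sum_add_distrib]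
        exact sum_congr rfl fun k _ => by ring
    _ ≤ 1 / (n : ℝ) * ∑ k, σ * (|p.2 k - q.2 k| + ς * |p.1 - q.1|) * (1 - ηlb + ς * ηlb) := by
        gcongr 1 / (n : ℝ) * ?_
        exact sum_le_sum fun k _ => hfactor k
    _ = σ * (1 - ηlb + ς * ηlb) * aggregateDist ς p q := by
        simp only [aggregateDist, mul_sum]
        exact sum_congr rfl fun k _ => by ring

theorem isFixedPt_aggregateMap_iff (p : ℝ × (Fin n → ℝ)) :
    IsFixedPt (aggregateMap ξ η W) p ↔
      (1 / (n : ℝ)) * ∑ k, ξ k (p.2 k) p.1 * η k = p.1 ∧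
        ∀ i, ∑ k, ξ k (p.2 k) p.1 * W k i = p.2 i := by
  simp only [IsFixedPt, aggregateMap, Prod.ext_iff, funext_iff]

end Aggregate

/-- **Contraction estimate for the finite-`n` aggregate operator.**
With weights `W j i ≥ 0` summing (over `i`) to `1 − η j`, `η j ∈ [η̲, 1]`, and
`ξ j` Lipschitz as in B.3, the aggregate operator
`F(x_b, x) = ((1/n) ∑_j ξ_j(x_j, x_b) η_j, (∑_j ξ_j(x_j, x_b) W_{j,i})_i)`
is a `σ(1−η̲+ςη̲)`-contraction in the norm `‖(x_b,x)‖₁ = (1/n) ∑_j (|x_j| + ς|x_b|)`;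
hence if `σ(1−η̲+ςη̲) < 1` it has a unique fixed point. -/
theorem finite_n_aggregate_contraction
    (n : ℕ) (hn : 1 ≤ n) (σ ς ηlb : ℝ)
    (hσ : σ ∈ Set.Ioc (0 : ℝ) 1) (hς : ς ∈ Set.Ioc (0 : ℝ) 1)
    (hηlb : ηlb ∈ Set.Icc (0 : ℝ) 1)
    (η : Fin n → ℝ) (hη : ∀ j, η j ∈ Set.Icc ηlb 1)
    (W : Fin n → Fin n → ℝ) (hW : ∀ j i, 0 ≤ W j i)
    (hWsum : ∀ j, ∑ i, W j i = 1 - η j)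
    (ξ : Fin n → ℝ → ℝ → ℝ)
    (hξ : ∀ j x u xb ub, |ξ j x xb - ξ j u ub| ≤ σ * (|x - u| + ς * |xb - ub|)) :
    (∀ (xb ub : ℝ) (x u : Fin n → ℝ),
      (1 / (n : ℝ)) * ∑ j,
          (|(∑ k, ξ k (x k) xb * W k j) - (∑ k, ξ k (u k) ub * W k j)|
            + ς * |((1 / (n : ℝ)) * ∑ k, ξ k (x k) xb * η k)
                  - ((1 / (n : ℝ)) * ∑ k, ξ k (u k) ub * η k)|)
        ≤ σ * (1 - ηlb + ς * ηlb)
            * ((1 / (n : ℝ)) * ∑ j, (|x j - u j| + ς * |xb - ub|)))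
    ∧ (σ * (1 - ηlb + ς * ηlb) < 1 →
        ∃! p : ℝ × (Fin n → ℝ),
          ((1 / (n : ℝ)) * ∑ k, ξ k (p.2 k) p.1 * η k = p.1)
          ∧ ∀ i, ∑ k, ξ k (p.2 k) p.1 * W k i = p.2 i) := by
  have hn0 : n ≠ 0 := Nat.one_le_iff_ne_zero.1 hn
  have hcontr := aggregateDist_aggregateMap_le hn0 hς.1.le hς.2 hηlb.1 hη hW hWsum hξ
  refine ⟨fun xb ub x u => hcontr (xb, x) (ub, u), fun hK => ?_⟩
  have hK0 : 0 ≤ σ * (1 - ηlb + ς * ηlb) :=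
    mul_nonneg hσ.1.le (by linarith [hηlb.2, mul_nonneg hς.1.le hηlb.1])
  simp only [← isFixedPt_aggregateMap_iff]
  exact exists_unique_isFixedPt_of_le_mul hK0 hK
    (add_nonneg n.cast_nonneg (inv_nonneg.2 hς.1.le))
    (aggregateDist_le_mul_dist hn0 hς.1.le) (dist_le_mul_aggregateDist hn0 hς.1) hcontr
end

section
/- Let σ, ς ∈ (0,1], let a_{11}, a_{12}, a_{21}, a_{22}, b_1, b_2 be nonnegative reals, let f^b : ℝ → ℝ be 1-Lipschitz, and let F^1, F^2 : ℝ² → ℝ satisfy |F^m(x, x_b) − F^m(u, u_b)| ≤ σ(|x − u| + ς|x_b − u_b|) for m = 1,2 and all arguments. Define T : ℝ³ → ℝ³ by T(x̄_b, x̄^1, x̄^2) := (γ-component) T_b := b_1 F^1(x̄^1, f^b(x̄_b)) + b_2 F^2(x̄^2, f^b(x̄_b)), T_1 := a_{11} F^1(x̄^1, f^b(x̄_b)) + a_{21} F^2(x̄^2, f^b(x̄_b)), T_2 := a_{12} F^1(x̄^1, f^b(x̄_b)) + a_{22} F^2(x̄^2, f^b(x̄_b)), and set ρ_ς := max{a_{11}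 + a_{21}, a_{12} + a_{22}} + ς(b_1 + b_2). Then, with respect to the norm ‖(x̄_b, x̄^1, x̄^2)‖ := max{|x̄^1|, |x̄^2|} + ς|x̄_b|, the map T is Lipschitz with constant σ ρ_ς; in particular, if σ ρ_ς < 1 then T has a unique fixed point. -/
/-!
Writing `ρ := max (a₁₁ + a₂₁) (a₁₂ + a₂₂) + ς (b₁ + b₂)`, each coordinate of `T` is a
nonnegative combination of `F¹` and `F²`, and both of these move by at most
`σ (max |Δx¹| |Δx²| + ς |Δx_b|)` because `f^b` is `1`-Lipschitz; summing with the weights of the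
norm gives the Lipschitz constant `σ ρ`. The weighted norm is equivalent to the sup norm on `ℝ³`,
so when `σ ρ < 1` some iterate of `T` is a contraction for the usual metric, and Banach's theorem
applies to that iterate.
-/

open Function

theorem exists_unique_isFixedPt_of_contracting_equiv_dist {α : Type*} [MetricSpace α]
    [Nonempty α] [CompleteSpace α] {f : α → α} {d : α → α → ℝ} {A B K : ℝ}
    (hA : 0 ≤ A) (hdist_le : ∀ x y, dist x y ≤ A * d x y) (hd_le : ∀ x y, d x y ≤ B * dist x y)
    (hK₀ : 0 ≤ K) (hK : K < 1) (hf : ∀ x y, d (f x) (f y) ≤ K * d x y) :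
    ∃! x, IsFixedPt f x := by
  have hiter : ∀ n x y, d (f^[n] x) (f^[n] y) ≤ K ^ n * d x y := by
    intro n
    induction n with
    | zero => simp
    | succ n ih =>
      intro x y
      calc d (f^[n + 1] x) (f^[n + 1] y) ≤ K ^ n * d (f x) (f y) := by
            simpa only [iterate_succ_apply] using ih (f x) (f y)
        _ ≤ K ^ n * (K * d x y) := by gcongr; exact hf x y
        _ = K ^ (n + 1) * d x y := by ring
  obtain ⟨n, hn⟩ : ∃ n, A * K ^ n * B < 1 := by
    have h := ((tendsto_pow_atTop_nhds_zero_of_lt_one hK₀ hK).const_mul A).mul_const B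
    simp only [mul_zero, zero_mul] at h
    exact (h.eventually (gt_mem_nhds one_pos)).exists
  have hlip : LipschitzWith (A * K ^ n * B).toNNReal f^[n] := by
    refine LipschitzWith.of_dist_le' fun x y => ?_
    calc dist (f^[n] x) (f^[n] y) ≤ A * d (f^[n] x) (f^[n] y) := hdist_le _ _
      _ ≤ A * (K ^ n * (B * dist x y)) := by
          gcongr
          exact (hiter n x y).trans (by gcongr; exact hd_le x y)
      _ = A * K ^ n * B * dist x y := by ring
  have hcontr : ContractingWith (A * K ^ n * B).toNNReal f^[n] :=
    ⟨by simpa using hn, hlip⟩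
  refine ⟨_, hcontr.isFixedPt_fixedPoint_iterate, fun y hy => ?_⟩
  exact hcontr.fixedPoint_unique (hy.iterate n)

lemma abs_lincomb_sub_le {k l a a' b b' E : ℝ} (hk : 0 ≤ k) (hl : 0 ≤ l)
    (ha : |a - a'| ≤ E) (hb : |b - b'| ≤ E) :
    |(k * a + l * b) - (k * a' + l * b')| ≤ (k + l) * E :=
  calc |(k * a + l * b) - (k * a' + l * b')| = |k * (a - a') + l * (b - b')| := by
        congr 1; ring
    _ ≤ k * |a - a'| + l * |b - b'| := by
        simpa only [abs_mul, abs_of_nonneg hk, abs_of_nonneg hl] using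
          abs_add_le (k * (a - a')) (l * (b - b'))
    _ ≤ (k + l) * E := by nlinarith

/-- The map `T` of the limit system on `(x̄_b, x̄¹, x̄²)`. -/
def limitMap (a11 a12 a21 a22 b1 b2 : ℝ) (fb : ℝ → ℝ) (F1 F2 : ℝ → ℝ → ℝ)
    (p : ℝ × ℝ × ℝ) : ℝ × ℝ × ℝ :=
  (b1 * F1 p.2.1 (fb p.1) + b2 * F2 p.2.2 (fb p.1),
   a11 * F1 p.2.1 (fb p.1) + a21 * F2 p.2.2 (fb p.1),
   a12 * F1 p.2.1 (fb p.1) + a22 * F2 p.2.2 (fb p.1))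

/-- The distance of the norm `max {|x̄¹|, |x̄²|} + ς |x̄_b|`. -/
def weightedDist (ς : ℝ) (p q : ℝ × ℝ × ℝ) : ℝ :=
  max |p.2.1 - q.2.1| |p.2.2 - q.2.2| + ς * |p.1 - q.1|

lemma dist_le_inv_mul_weightedDist {ς : ℝ} (hς : ς ∈ Set.Ioc (0 : ℝ) 1) (p q : ℝ × ℝ × ℝ) :
    dist p q ≤ ς⁻¹ * weightedDist ς p q := by
  obtain ⟨hς₀, hς₁⟩ := hς
  rw [le_inv_mul_iff₀ hς₀, weightedDist, Prod.dist_eq, Prod.dist_eq, Real.dist_eq,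
    Real.dist_eq, Real.dist_eq]
  have hM : 0 ≤ max |p.2.1 - q.2.1| |p.2.2 - q.2.2| := (abs_nonneg _).trans (le_max_left _ _)
  rcases le_total |p.1 - q.1| (max |p.2.1 - q.2.1| |p.2.2 - q.2.2|) with h | h
  · rw [max_eq_right h]; nlinarith [abs_nonneg (p.1 - q.1)]
  · rw [max_eq_left h]; nlinarith

lemma weightedDist_le_mul_dist {ς : ℝ} (hς : 0 ≤ ς) (p q : ℝ × ℝ × ℝ) :
    weightedDist ς p q ≤ (1 + ς) * dist p q := by
  rw [weightedDist, Prod.dist_eq, Prod.dist_eq, Real.dist_eq, Real.dist_eq, Real.dist_eq]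
  have h₁ : |p.1 - q.1| ≤ max |p.1 - q.1| (max |p.2.1 - q.2.1| |p.2.2 - q.2.2|) :=
    le_max_left _ _
  have h₂ : max |p.2.1 - q.2.1| |p.2.2 - q.2.2| ≤
      max |p.1 - q.1| (max |p.2.1 - q.2.1| |p.2.2 - q.2.2|) := le_max_right _ _
  nlinarith

section LimitSystem

variable {σ ς a11 a12 a21 a22 b1 b2 : ℝ} {fb : ℝ → ℝ} {F1 F2 : ℝ → ℝ → ℝ}

lemma weightedDist_limitMap_le (hσ : 0 ≤ σ) (hς : 0 ≤ ς)
    (ha11 : 0 ≤ a11) (ha12 : 0 ≤ a12) (ha21 : 0 ≤ a21) (ha22 : 0 ≤ a22)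
    (hb1 : 0 ≤ b1) (hb2 : 0 ≤ b2) (hfb : ∀ x u : ℝ, |fb x - fb u| ≤ |x - u|)
    (hF1 : ∀ x u xb ub : ℝ, |F1 x xb - F1 u ub| ≤ σ * (|x - u| + ς * |xb - ub|))
    (hF2 : ∀ x u xb ub : ℝ, |F2 x xb - F2 u ub| ≤ σ * (|x - u| + ς * |xb - ub|))
    (p q : ℝ × ℝ × ℝ) :
    weightedDist ς (limitMap a11 a12 a21 a22 b1 b2 fb F1 F2 p)
        (limitMap a11 a12 a21 a22 b1 b2 fb F1 F2 q)
      ≤ σ * (max (a11 + a21) (a12 + a22) + ς * (b1 + b2)) * weightedDist ς p q := by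
  set M := max |p.2.1 - q.2.1| |p.2.2 - q.2.2|
  set E := σ * (M + ς * |p.1 - q.1|)
  have hFE : ∀ F : ℝ → ℝ → ℝ,
      (∀ x u xb ub : ℝ, |F x xb - F u ub| ≤ σ * (|x - u| + ς * |xb - ub|)) →
      ∀ x u, |x - u| ≤ M → |F x (fb p.1) - F u (fb q.1)| ≤ E := fun F hLip x u hxu =>
    (hLip _ _ _ _).trans <|
      mul_le_mul_of_nonneg_left (add_le_add hxu (mul_le_mul_of_nonneg_left (hfb _ _) hς)) hσ
  have h1 := hFE F1 hF1 _ _ (le_max_left _ _)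
  have h2 := hFE F2 hF2 _ _ (le_max_right _ _)
  have hE : 0 ≤ E := (abs_nonneg _).trans h1
  calc weightedDist ς (limitMap a11 a12 a21 a22 b1 b2 fb F1 F2 p)
        (limitMap a11 a12 a21 a22 b1 b2 fb F1 F2 q)
      ≤ max (a11 + a21) (a12 + a22) * E + ς * ((b1 + b2) * E) := by
        refine add_le_add (max_le ?_ ?_) ?_
        · exact (abs_lincomb_sub_le ha11 ha21 h1 h2).trans (by gcongr; exact le_max_left _ _)
        · exact (abs_lincomb_sub_le ha12 ha22 h1 h2).trans (by gcongr; exact le_max_right _ _)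
        · exact mul_le_mul_of_nonneg_left (abs_lincomb_sub_le hb1 hb2 h1 h2) hς
    _ = σ * (max (a11 + a21) (a12 + a22) + ς * (b1 + b2)) * weightedDist ς p q := by
        rw [weightedDist]; ring

lemma isFixedPt_limitMap_iff {q : ℝ × ℝ × ℝ} :
    IsFixedPt (limitMap a11 a12 a21 a22 b1 b2 fb F1 F2) q ↔
      b1 * F1 q.2.1 (fb q.1) + b2 * F2 q.2.2 (fb q.1) = q.1
      ∧ a11 * F1 q.2.1 (fb q.1) + a21 * F2 q.2.2 (fb q.1) = q.2.1
      ∧ a12 * F1 q.2.1 (fb q.1) + a22 * F2 q.2.2 (fb q.1) = q.2.2 := by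
  simp only [IsFixedPt, limitMap, Prod.ext_iff]

end LimitSystem

/-- **Contraction estimate for the three-dimensional limit system.**
With nonnegative coefficients, a `1`-Lipschitz `f^b` and `F^1, F^2` Lipschitz as in B.3,
the map `T` is Lipschitz with constant `σ ρ_ς` with respect to the norm
`‖(x̄_b, x̄¹, x̄²)‖ = max{|x̄¹|,|x̄²|} + ς|x̄_b|`, where
`ρ_ς = max{a₁₁+a₂₁, a₁₂+a₂₂} + ς(b₁+b₂)`; in particular if `σ ρ_ς < 1` then `T`
has a unique fixed point. -/
theorem three_dim_limit_contraction
    (σ ς : ℝ) (hσ : σ ∈ Set.Ioc (0 : ℝ) 1) (hς : ς ∈ Set.Ioc (0 : ℝ) 1)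
    (a11 a12 a21 a22 b1 b2 : ℝ)
    (ha11 : 0 ≤ a11) (ha12 : 0 ≤ a12) (ha21 : 0 ≤ a21) (ha22 : 0 ≤ a22)
    (hb1 : 0 ≤ b1) (hb2 : 0 ≤ b2)
    (fb : ℝ → ℝ) (hfb : ∀ x u : ℝ, |fb x - fb u| ≤ |x - u|)
    (F1 F2 : ℝ → ℝ → ℝ)
    (hF1 : ∀ x u xb ub : ℝ, |F1 x xb - F1 u ub| ≤ σ * (|x - u| + ς * |xb - ub|))
    (hF2 : ∀ x u xb ub : ℝ, |F2 x xb - F2 u ub| ≤ σ * (|x - u| + ς * |xb - ub|)) :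
    (∀ xb x1 x2 ub u1 u2 : ℝ,
      max |(a11 * F1 x1 (fb xb) + a21 * F2 x2 (fb xb))
            - (a11 * F1 u1 (fb ub) + a21 * F2 u2 (fb ub))|
          |(a12 * F1 x1 (fb xb) + a22 * F2 x2 (fb xb))
            - (a12 * F1 u1 (fb ub) + a22 * F2 u2 (fb ub))|
        + ς * |(b1 * F1 x1 (fb xb) + b2 * F2 x2 (fb xb))
            - (b1 * F1 u1 (fb ub) + b2 * F2 u2 (fb ub))|
      ≤ σ * (max (a11 + a21) (a12 + a22) + ς * (b1 + b2))
          * (max |x1 - u1| |x2 - u2| + ς * |xb - ub|))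
    ∧ (σ * (max (a11 + a21) (a12 + a22) + ς * (b1 + b2)) < 1 →
        ∃! q : ℝ × ℝ × ℝ,
          b1 * F1 q.2.1 (fb q.1) + b2 * F2 q.2.2 (fb q.1) = q.1
          ∧ a11 * F1 q.2.1 (fb q.1) + a21 * F2 q.2.2 (fb q.1) = q.2.1
          ∧ a12 * F1 q.2.1 (fb q.1) + a22 * F2 q.2.2 (fb q.1) = q.2.2) := by
  have hσ₀ : 0 ≤ σ := hσ.1.le
  have hς₀ : 0 ≤ ς := hς.1.le
  have hT := weightedDist_limitMap_le hσ₀ hς₀ ha11 ha12 ha21 ha22 hb1 hb2 hfb hF1 hF2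
  refine ⟨fun xb x1 x2 ub u1 u2 => hT (xb, x1, x2) (ub, u1, u2), fun hρ => ?_⟩
  have hρ₀ : 0 ≤ σ * (max (a11 + a21) (a12 + a22) + ς * (b1 + b2)) := by
    have := (add_nonneg ha11 ha21).trans (le_max_left _ (a12 + a22))
    positivity
  simpa only [isFixedPt_limitMap_iff] using
    exists_unique_isFixedPt_of_contracting_equiv_dist (inv_nonneg.2 hς₀)
      (dist_le_inv_mul_weightedDist hς) (weightedDist_le_mul_dist hς₀) hρ₀ hρ hT
end

section
/- Let γ ∈ (0,1), λ_1, λ_2 ∈ (0,1], p_1^{sb}, p_2^{sb} ∈ [0,1), let b_1, b_2 ∈ {0,1}, let f^b : ℝ → ℝ, and let F^1, F^2 : ℝ³ → ℝ. Set μ_1 := ((1−γ)/γ) · ((1−λ_2)/λ_2) · (1/(1−p_2^{sb})) · b_2 and μ_2 := (γ/(1−γ)) · ((1−λ_1)/λ_1) · (1/(1−p_1^{sb})) · b_1. Then (x̄_b, x̄^{11}, x̄^{12}, x̄^{21}, x̄^{22}) is a solution of the five-dimensional system x̄^{11} = F^1(x̄^{11}, x̄^{12}, x_b) λ_1 (1−p_1^{sb});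 x̄^{12} = F^2(x̄^{21}, x̄^{22}, x_b) ((1−γ)/γ)(1−λ_2) b_2; x̄^{21} = F^1(x̄^{11}, x̄^{12}, x_b) (γ/(1−γ))(1−λ_1) b_1; x̄^{22} = F^2(x̄^{21}, x̄^{22}, x_b) λ_2 (1−p_2^{sb}); x̄_b = γ F^1(x̄^{11}, x̄^{12}, x_b) λ_1 p_1^{sb} + (1−γ) F^2(x̄^{21}, x̄^{22}, x_b) λ_2 p_2^{sb} (where x_b := f^b(x̄_b)) if and only if x̄^{12} = μ_1 x̄^{22}, x̄^{21} = μ_2 x̄^{11}, and (x̄_b, x̄^{11}, x̄^{22}) solves the reduced three-dimensional system: x̄^{11} = F^1(x̄^{11}, μ_1 x̄^{22}, x_b) λ_1 (1−p_1^{sb}); x̄^{22} = F^2(μ_2 x̄^{11}, x̄^{22}, x_b) λ_2 (1−p_2^{sb}); x̄_b = γ F^1(x̄^{11}, μ_1 x̄^{22}, x_b) λ_1 p_1^{sb} + (1−γ) F^2(μ_2 x̄^{11}, x̄^{22}, x_b) λ_2 p_2^{sb}. -/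
/-! The off-diagonal equations for `x̄¹²` and `x̄²¹` carry the same factors `F²` and `F¹` as the
diagonal equations for `x̄²²` and `x̄¹¹`, only with other weights, and `μ₁`, `μ₂` are exactly the
ratios of those weights. Hence `x̄¹² = μ₁ x̄²²` and `x̄²¹ = μ₂ x̄¹¹` at every solution, and
substituting them leaves the three-dimensional system. -/

theorem mul_eq_mul_of_eq_mul_of_mul_eq {R : Type*} [CommSemiring R] {F d e μ y : R}
    (hy : y = F * d) (hμ : μ * d = e) : F * e = μ * y := by
  rw [hy, ← hμ]; ring

theorem mul_one_sub_div_mul_one_div_mul_mul_cancel {K : Type*} [Field K] {a l q b : K}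
    (hl : l ≠ 0) (hq : q ≠ 0) :
    a * ((1 - l) / l) * (1 / q) * b * (l * q) = a * (1 - l) * b := by
  field_simp

theorem five_dim_iff_three_dim_reduction_general
    (γ lam1 lam2 p1sb p2sb : ℝ)
    (hlam1 : lam1 ∈ Set.Ioc (0 : ℝ) 1) (hlam2 : lam2 ∈ Set.Ioc (0 : ℝ) 1)
    (hp1 : p1sb ∈ Set.Ico (0 : ℝ) 1) (hp2 : p2sb ∈ Set.Ico (0 : ℝ) 1)
    (b1 b2 : ℝ)
    (fb : ℝ → ℝ) (F1 F2 : ℝ → ℝ → ℝ → ℝ)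
    (μ1 μ2 : ℝ)
    (hμ1 : μ1 = ((1 - γ) / γ) * ((1 - lam2) / lam2) * (1 / (1 - p2sb)) * b2)
    (hμ2 : μ2 = (γ / (1 - γ)) * ((1 - lam1) / lam1) * (1 / (1 - p1sb)) * b1)
    (xb x11 x12 x21 x22 : ℝ) :
    (x11 = F1 x11 x12 (fb xb) * (lam1 * (1 - p1sb))
      ∧ x12 = F2 x21 x22 (fb xb) * (((1 - γ) / γ) * (1 - lam2) * b2)
      ∧ x21 = F1 x11 x12 (fb xb) * ((γ / (1 - γ)) * (1 - lam1) * b1)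
      ∧ x22 = F2 x21 x22 (fb xb) * (lam2 * (1 - p2sb))
      ∧ xb = γ * F1 x11 x12 (fb xb) * (lam1 * p1sb)
              + (1 - γ) * F2 x21 x22 (fb xb) * (lam2 * p2sb))
    ↔ (x12 = μ1 * x22 ∧ x21 = μ2 * x11
        ∧ x11 = F1 x11 (μ1 * x22) (fb xb) * (lam1 * (1 - p1sb))
        ∧ x22 = F2 (μ2 * x11) x22 (fb xb) * (lam2 * (1 - p2sb))
        ∧ xb = γ * F1 x11 (μ1 * x22) (fb xb) * (lam1 * p1sb)
                + (1 - γ) * F2 (μ2 * x11) x22 (fb xb) * (lam2 * p2sb)) := by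
  have hμ1_weight : μ1 * (lam2 * (1 - p2sb)) = (1 - γ) / γ * (1 - lam2) * b2 := by
    rw [hμ1]
    exact mul_one_sub_div_mul_one_div_mul_mul_cancel hlam2.1.ne' (sub_ne_zero.2 hp2.2.ne')
  have hμ2_weight : μ2 * (lam1 * (1 - p1sb)) = γ / (1 - γ) * (1 - lam1) * b1 := by
    rw [hμ2]
    exact mul_one_sub_div_mul_one_div_mul_mul_cancel hlam1.1.ne' (sub_ne_zero.2 hp1.2.ne')
  constructor
  · rintro ⟨h11, h12, h21, h22, hb⟩
    have e12 : x12 = μ1 * x22 := h12.trans (mul_eq_mul_of_eq_mul_of_mul_eq h22 hμ1_weight)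
    have e21 : x21 = μ2 * x11 := h21.trans (mul_eq_mul_of_eq_mul_of_mul_eq h11 hμ2_weight)
    subst e12 e21
    exact ⟨rfl, rfl, h11, h22, hb⟩
  · rintro ⟨rfl, rfl, h11, h22, hb⟩
    exact ⟨h11, (mul_eq_mul_of_eq_mul_of_mul_eq h22 hμ1_weight).symm,
      (mul_eq_mul_of_eq_mul_of_mul_eq h11 hμ2_weight).symm, h22, hb⟩

/-- **Dimension reduction for the alternate limit system.**
The five-dimensional constant-sequence fixed-point system is equivalent to the
proportionality relations `x̄¹² = μ₁ x̄²²`, `x̄²¹ = μ₂ x̄¹¹` together with the reduced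
three-dimensional system. -/
theorem five_dim_iff_three_dim_reduction
    (γ lam1 lam2 p1sb p2sb : ℝ)
    (hγ : γ ∈ Set.Ioo (0 : ℝ) 1)
    (hlam1 : lam1 ∈ Set.Ioc (0 : ℝ) 1) (hlam2 : lam2 ∈ Set.Ioc (0 : ℝ) 1)
    (hp1 : p1sb ∈ Set.Ico (0 : ℝ) 1) (hp2 : p2sb ∈ Set.Ico (0 : ℝ) 1)
    (b1 b2 : ℝ) (hb1 : b1 = 0 ∨ b1 = 1) (hb2 : b2 = 0 ∨ b2 = 1)
    (fb : ℝ → ℝ) (F1 F2 : ℝ → ℝ → ℝ → ℝ)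
    (μ1 μ2 : ℝ)
    (hμ1 : μ1 = ((1 - γ) / γ) * ((1 - lam2) / lam2) * (1 / (1 - p2sb)) * b2)
    (hμ2 : μ2 = (γ / (1 - γ)) * ((1 - lam1) / lam1) * (1 / (1 - p1sb)) * b1)
    (xb x11 x12 x21 x22 : ℝ) :
    (x11 = F1 x11 x12 (fb xb) * (lam1 * (1 - p1sb))
      ∧ x12 = F2 x21 x22 (fb xb) * (((1 - γ) / γ) * (1 - lam2) * b2)
      ∧ x21 = F1 x11 x12 (fb xb) * ((γ / (1 - γ)) * (1 - lam1) * b1)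
      ∧ x22 = F2 x21 x22 (fb xb) * (lam2 * (1 - p2sb))
      ∧ xb = γ * F1 x11 x12 (fb xb) * (lam1 * p1sb)
              + (1 - γ) * F2 x21 x22 (fb xb) * (lam2 * p2sb))
    ↔ (x12 = μ1 * x22 ∧ x21 = μ2 * x11
        ∧ x11 = F1 x11 (μ1 * x22) (fb xb) * (lam1 * (1 - p1sb))
        ∧ x22 = F2 (μ2 * x11) x22 (fb xb) * (lam2 * (1 - p2sb))
        ∧ xb = γ * F1 x11 (μ1 * x22) (fb xb) * (lam1 * p1sb)
                + (1 - γ) * F2 (μ2 * x11) x22 (fb xb) * (lam2 * p2sb)) :=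
  five_dim_iff_three_dim_reduction_general γ lam1 lam2 p1sb p2sb hlam1 hlam2 hp1 hp2 b1 b2 fb F1 F2
    μ1 μ2 hμ1 hμ2 xb x11 x12 x21 x22
end

section
/- Assume k_{d2} > v_2. Then the group-2 limit clearing equation has a unique solution x̄_2^∞; moreover, setting β_0 := (ȳ_2 + v_2 − k_{u2}) / ((ȳ_2 − w(k_{u2} − k_{d2}))(1 − p_2^{sb})) if ȳ_2 > w(k_{u2} − k_{d2}) and β_0 := 0 otherwise: (i) if λ_2 ≥ (ȳ_2 + v_2 − k_{d2}) / (ȳ_2 (1 − p_2^{sb})), then x̄_2^∞ = ȳ_2 (1 − p_2^{sb}) λ_2 and P_D = 0; (ii) if β_0 < λ_2 < (ȳ_2 + v_2 − k_{d2}) / (ȳ_2 (1 − p_2^{sb})), then x̄_2^∞ = ( ȳ_2 − ((ȳ_2 − k_{d2} + v_2) w − ȳ_2 (1 − p_2^{sb}) w λ_2) / (1 − w (1 − p_2^{sb}) λ_2) ) · (1 − p_2^{sb}) λ_2 and P_D = w; (iii) if λ_2 < β_0, then x̄_2^∞ = ( (l̄_2 − v_2)^+ / (1 − (1 − p_2^{sb})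 λ_2) ) · (1 − p_2^{sb}) λ_2 and P_D = 1. -/
/-!
The right-hand side of the clearing equation is a `δ`-contraction with `δ < 1`, because the
truncation `t ↦ min ȳ (max t 0)` is `1`-Lipschitz and the two shocks enter through a convex
combination; hence there is at most one solution. In each of the three regimes the truncations
become affine, the equation becomes linear, and its explicit solution is checked to satisfy the
regime's inequalities; as `v < k_d ≤ k_u`, no truncation at `0` ever binds there, so the three
regimes exhaust all parameters.
-/

/-- The fixed-point equation defining the group-2 limiting aggregate clearing value. -/
def clearingEq2 (kd ku v ybar w δ x : ℝ) : Prop :=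
  x = (w * min ybar (max (kd - v + x) 0) + (1 - w) * min ybar (max (ku - v + x) 0)) * δ

/-- The limiting default probability at a solution `x` of the clearing equation. -/
noncomputable def defaultProb (kd ku v ybar w x : ℝ) : ℝ :=
  if ybar ≤ kd - v + x then 0 else if ybar ≤ ku - v + x then w else 1

theorem abs_min_max_sub_min_max_le {α : Type*} [AddCommGroup α] [LinearOrder α]
    [IsOrderedAddMonoid α] (a c s t : α) :
    |min a (max s c) - min a (max t c)| ≤ |s - t| :=
  calc |min a (max s c) - min a (max t c)| ≤ max |a - a| |max s c - max t c| :=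
        abs_min_sub_min_le_max _ _ _ _
    _ = |max s c - max t c| := by simp
    _ ≤ |s - t| := abs_max_sub_max_le_abs _ _ _

section ClearingEquation

variable {kd ku v Y w δ : ℝ}

theorem clearingEq2_unique (hw0 : 0 ≤ w) (hw1 : w ≤ 1) (hδ0 : 0 ≤ δ) (hδ1 : δ < 1)
    {x y : ℝ} (hx : clearingEq2 kd ku v Y w δ x) (hy : clearingEq2 kd ku v Y w δ y) :
    x = y := by
  set A := min Y (max (kd - v + x) 0) - min Y (max (kd - v + y) 0)
  set B := min Y (max (ku - v + x) 0) - min Y (max (ku - v + y) 0)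
  have hA : |A| ≤ |x - y| := by
    simpa using abs_min_max_sub_min_max_le Y 0 (kd - v + x) (kd - v + y)
  have hB : |B| ≤ |x - y| := by
    simpa using abs_min_max_sub_min_max_le Y 0 (ku - v + x) (ku - v + y)
  have hxy : x - y = δ * (w * A + (1 - w) * B) := by
    unfold clearingEq2 at hx hy
    linear_combination hx - hy
  have hcontr : |x - y| ≤ δ * |x - y| :=
    calc |x - y| = δ * |w * A + (1 - w) * B| := by rw [hxy, abs_mul, abs_of_nonneg hδ0]
      _ ≤ δ * (w * |A| + (1 - w) * |B|) := by
        gcongr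
        calc |w * A + (1 - w) * B| ≤ |w * A| + |(1 - w) * B| := abs_add_le _ _
          _ = w * |A| + (1 - w) * |B| := by
            rw [abs_mul, abs_mul, abs_of_nonneg hw0, abs_of_nonneg (sub_nonneg.2 hw1)]
      _ ≤ δ * (w * |x - y| + (1 - w) * |x - y|) := by
        gcongr
      _ = δ * |x - y| := by ring
  have : |x - y| ≤ 0 := by nlinarith [abs_nonneg (x - y)]
  exact sub_eq_zero.1 (abs_nonpos_iff.1 this)

theorem clearingEq2_solvent (hk : kd ≤ ku) (h : Y ≤ kd - v + δ * Y) :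
    clearingEq2 kd ku v Y w δ (Y * δ) ∧ defaultProb kd ku v Y w (Y * δ) = 0 := by
  have hd : Y ≤ kd - v + Y * δ := by linarith
  have hu : Y ≤ ku - v + Y * δ := by linarith
  constructor
  · rw [clearingEq2, min_eq_left (le_max_of_le_left hd), min_eq_left (le_max_of_le_left hu)]
    ring
  · rw [defaultProb, if_pos hd]

theorem clearingEq2_default_down (hkv : v < kd) (hw0 : 0 ≤ w) (hw1 : w ≤ 1)
    (hδ0 : 0 ≤ δ) (hδ1 : δ < 1)
    (hd : kd - v + δ * Y < Y) (hu : Y - (ku - v) ≤ δ * (Y - w * (ku - kd))) :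
    let x := ((1 - w) * Y + w * (kd - v)) * δ / (1 - w * δ)
    clearingEq2 kd ku v Y w δ x ∧ defaultProb kd ku v Y w x = w := by
  intro x
  have hwδ : 0 < 1 - w * δ := by nlinarith
  have hY : 0 < Y := by nlinarith
  have hx : x * (1 - w * δ) = ((1 - w) * Y + w * (kd - v)) * δ := div_mul_cancel₀ _ hwδ.ne'
  have hx0 : 0 ≤ x := by
    have : 0 ≤ (1 - w) * Y + w * (kd - v) := by nlinarith
    positivity
  have hxd : kd - v + x < Y := by nlinarith
  have hxu : Y ≤ ku - v + x := by nlinarith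
  constructor
  · rw [clearingEq2, max_eq_left (by linarith), max_eq_left (by linarith),
      min_eq_right hxd.le, min_eq_left hxu]
    nlinarith
  · rw [defaultProb, if_neg hxd.not_ge, if_pos hxu]

theorem clearingEq2_default_both (hk : kd ≤ ku) (hkv : v < kd) (hw1 : w ≤ 1)
    (hδ0 : 0 ≤ δ) (hδ1 : δ < 1) (hu : δ * (Y - w * (ku - kd)) < Y - (ku - v)) :
    let x := (w * kd + (1 - w) * ku - v) * δ / (1 - δ)
    clearingEq2 kd ku v Y w δ x ∧ defaultProb kd ku v Y w x = 1 := by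
  intro x
  have hδ : 0 < 1 - δ := by linarith
  have hx : x * (1 - δ) = (w * kd + (1 - w) * ku - v) * δ := div_mul_cancel₀ _ hδ.ne'
  have hm : 0 ≤ w * kd + (1 - w) * ku - v := by nlinarith
  have hx0 : 0 ≤ x := by positivity
  have hxu : ku - v + x < Y := by nlinarith
  have hxd : kd - v + x < Y := by linarith
  constructor
  · rw [clearingEq2, max_eq_left (by linarith), max_eq_left (by linarith),
      min_eq_right hxd.le, min_eq_right hxu.le]
    nlinarith
  · rw [defaultProb, if_neg hxd.not_ge, if_neg hxu.not_ge]

theorem exists_clearingEq2 (hk : kd ≤ ku) (hkv : v < kd) (hw0 : 0 ≤ w) (hw1 : w ≤ 1)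
    (hδ0 : 0 ≤ δ) (hδ1 : δ < 1) : ∃ x, clearingEq2 kd ku v Y w δ x := by
  rcases le_or_gt Y (kd - v + δ * Y) with hd | hd
  · exact ⟨_, (clearingEq2_solvent hk hd).1⟩
  rcases le_or_gt (Y - (ku - v)) (δ * (Y - w * (ku - kd))) with hu | hu
  · exact ⟨_, (clearingEq2_default_down hkv hw0 hw1 hδ0 hδ1 hd hu).1⟩
  · exact ⟨_, (clearingEq2_default_both hk hkv hw1 hδ0 hδ1 hu).1⟩

end ClearingEquation
section Thresholds

variable {kd ku v Y w p lam : ℝ}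

/-- The paper's `β₀`: below it both shocks cause default. -/
noncomputable def bothDefaultThreshold (kd ku v Y w p : ℝ) : ℝ :=
  if w * (ku - kd) < Y then (Y + v - ku) / ((Y - w * (ku - kd)) * (1 - p)) else 0

theorem threshold_le_iff_solvent (hY : 0 < Y) (hp : p < 1) :
    (Y + v - kd) / (Y * (1 - p)) ≤ lam ↔ Y ≤ kd - v + (1 - p) * lam * Y := by
  rw [div_le_iff₀ (mul_pos hY (sub_pos.2 hp))]
  constructor <;> intro h <;> linear_combination h

theorem sub_le_of_bothDefaultThreshold_lt (hk : kd ≤ ku) (hkv : v < kd) (hw1 : w ≤ 1)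
    (hp : p < 1) (hδ1 : (1 - p) * lam ≤ 1) (h : bothDefaultThreshold kd ku v Y w p < lam) :
    Y - (ku - v) ≤ (1 - p) * lam * (Y - w * (ku - kd)) := by
  unfold bothDefaultThreshold at h
  split_ifs at h with hY
  · have := (div_lt_iff₀ (mul_pos (sub_pos.2 hY) (sub_pos.2 hp))).1 h
    linarith
  · have hw : w * (ku - kd) ≤ ku - kd := by nlinarith
    nlinarith

theorem lt_sub_of_lt_bothDefaultThreshold (hlam : 0 < lam) (hp : p < 1)
    (h : lam < bothDefaultThreshold kd ku v Y w p) :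
    (1 - p) * lam * (Y - w * (ku - kd)) < Y - (ku - v) := by
  unfold bothDefaultThreshold at h
  split_ifs at h with hY
  · have := (lt_div_iff₀ (mul_pos (sub_pos.2 hY) (sub_pos.2 hp))).1 h
    linarith
  · linarith

end Thresholds

theorem group2_clearing_small_shock_general
    (kd2 ku2 v2 ybar2 w p2sb lam2 : ℝ)
    (hk : kd2 ≤ ku2) (hy : 0 < ybar2)
    (hw : w ∈ Set.Ioo (0 : ℝ) 1) (hp : p2sb ∈ Set.Ioo (0 : ℝ) 1)
    (hlam : lam2 ∈ Set.Ioc (0 : ℝ) 1)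
    (hkv : v2 < kd2) :
    (∃! x : ℝ, clearingEq2 kd2 ku2 v2 ybar2 w ((1 - p2sb) * lam2) x)
    ∧ ∀ x : ℝ, clearingEq2 kd2 ku2 v2 ybar2 w ((1 - p2sb) * lam2) x →
        (((ybar2 + v2 - kd2) / (ybar2 * (1 - p2sb)) ≤ lam2 →
            x = ybar2 * (1 - p2sb) * lam2
            ∧ defaultProb kd2 ku2 v2 ybar2 w x = 0)
        ∧ ((if w * (ku2 - kd2) < ybar2 then
              (ybar2 + v2 - ku2) / ((ybar2 - w * (ku2 - kd2)) * (1 - p2sb)) else 0) < lam2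
            ∧ lam2 < (ybar2 + v2 - kd2) / (ybar2 * (1 - p2sb)) →
            x = (ybar2 - ((ybar2 - kd2 + v2) * w - ybar2 * (1 - p2sb) * w * lam2)
                    / (1 - w * (1 - p2sb) * lam2)) * ((1 - p2sb) * lam2)
            ∧ defaultProb kd2 ku2 v2 ybar2 w x = w)
        ∧ (lam2 < (if w * (ku2 - kd2) < ybar2 then
              (ybar2 + v2 - ku2) / ((ybar2 - w * (ku2 - kd2)) * (1 - p2sb)) else 0) →
            x = (max (w * kd2 + (1 - w) * ku2 - v2) 0 / (1 - (1 - p2sb) * lam2))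
                  * ((1 - p2sb) * lam2)
            ∧ defaultProb kd2 ku2 v2 ybar2 w x = 1)) := by
  obtain ⟨hw0, hw1⟩ := hw
  obtain ⟨hp0, hp1⟩ := hp
  obtain ⟨hl0, hl1⟩ := hlam
  have hδ0 : 0 ≤ (1 - p2sb) * lam2 := mul_nonneg (sub_nonneg.2 hp1.le) hl0.le
  have hδ1 : (1 - p2sb) * lam2 < 1 := by nlinarith
  have huniq {x y : ℝ} := clearingEq2_unique (kd := kd2) (ku := ku2) (v := v2) (Y := ybar2)
    (x := x) (y := y) hw0.le hw1.le hδ0 hδ1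
  obtain ⟨x₀, hx₀⟩ := exists_clearingEq2 (Y := ybar2) hk hkv hw0.le hw1.le hδ0 hδ1
  refine ⟨⟨x₀, hx₀, fun y hy => huniq hy hx₀⟩,
    fun x hx => ⟨fun h => ?_, fun ⟨hβ, hd⟩ => ?_, fun hβ => ?_⟩⟩
  · obtain ⟨hsol, hP⟩ :=
      clearingEq2_solvent (w := w) hk ((threshold_le_iff_solvent hy hp1).1 h)
    rw [huniq hx hsol]
    exact ⟨by ring, hP⟩
  · obtain ⟨hsol, hP⟩ := clearingEq2_default_down hkv hw0.le hw1.le hδ0 hδ1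
      (not_le.1 ((threshold_le_iff_solvent hy hp1).not.1 hd.not_ge))
      (sub_le_of_bothDefaultThreshold_lt hk hkv hw1.le hp1 hδ1.le hβ)
    rw [huniq hx hsol]
    refine ⟨?_, hP⟩
    have : 1 - w * ((1 - p2sb) * lam2) ≠ 0 := by nlinarith
    have : 1 - w * (1 - p2sb) * lam2 ≠ 0 := by nlinarith
    field_simp
    ring
  · obtain ⟨hsol, hP⟩ := clearingEq2_default_both hk hkv hw1.le hδ0 hδ1
      (lt_sub_of_lt_bothDefaultThreshold hl0 hp1 hβ)
    rw [huniq hx hsol, max_eq_left (by nlinarith)]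
    exact ⟨by ring, hP⟩

/-- **Group-2 clearing vector and default probability, small-shock case `k_{d2} > v_2`.**
The limit clearing equation has a unique solution, and the solution together with the
default probability is given by the three-case closed form of the paper. -/
theorem group2_clearing_small_shock
    (kd2 ku2 v2 ybar2 w p2sb lam2 : ℝ)
    (hk : kd2 ≤ ku2) (hv : 0 ≤ v2) (hy : 0 < ybar2)
    (hw : w ∈ Set.Ioo (0 : ℝ) 1) (hp : p2sb ∈ Set.Ioo (0 : ℝ) 1)
    (hlam : lam2 ∈ Set.Ioc (0 : ℝ) 1)
    (hkv : v2 < kd2) :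
    (∃! x : ℝ, clearingEq2 kd2 ku2 v2 ybar2 w ((1 - p2sb) * lam2) x)
    ∧ ∀ x : ℝ, clearingEq2 kd2 ku2 v2 ybar2 w ((1 - p2sb) * lam2) x →
        (((ybar2 + v2 - kd2) / (ybar2 * (1 - p2sb)) ≤ lam2 →
            x = ybar2 * (1 - p2sb) * lam2
            ∧ defaultProb kd2 ku2 v2 ybar2 w x = 0)
        ∧ ((if w * (ku2 - kd2) < ybar2 then
              (ybar2 + v2 - ku2) / ((ybar2 - w * (ku2 - kd2)) * (1 - p2sb)) else 0) < lam2
            ∧ lam2 < (ybar2 + v2 - kd2) / (ybar2 * (1 - p2sb)) →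
            x = (ybar2 - ((ybar2 - kd2 + v2) * w - ybar2 * (1 - p2sb) * w * lam2)
                    / (1 - w * (1 - p2sb) * lam2)) * ((1 - p2sb) * lam2)
            ∧ defaultProb kd2 ku2 v2 ybar2 w x = w)
        ∧ (lam2 < (if w * (ku2 - kd2) < ybar2 then
              (ybar2 + v2 - ku2) / ((ybar2 - w * (ku2 - kd2)) * (1 - p2sb)) else 0) →
            x = (max (w * kd2 + (1 - w) * ku2 - v2) 0 / (1 - (1 - p2sb) * lam2))
                  * ((1 - p2sb) * lam2)
            ∧ defaultProb kd2 ku2 v2 ybar2 w x = 1)) :=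
  group2_clearing_small_shock_general kd2 ku2 v2 ybar2 w p2sb lam2 hk hy hw hp hlam hkv
end

section
/- Assume v_2 > k_{d2}, k_{d2} < k_{u2}, and ȳ_2 > w(k_{u2} − k_{d2}). Then the group-2 limit clearing equation has a unique solution x̄_2^∞; moreover, setting β_1 := (v_2 − k_{d2}) / (ȳ_2 (1−w)(1−p_2^{sb})), β_2 := (ȳ_2 + v_2 − k_{u2}) / ((ȳ_2 − w(k_{u2} − k_{d2}))(1−p_2^{sb})), β_3 := (v_2 − k_{d2}) / ((1−w)(k_{u2} − k_{d2})(1−p_2^{sb})), β_4 := (ȳ_2 − k_{u2} + v_2) / (ȳ_2 (1−w)(1−p_2^{sb})): (i) if β_4 < λ_2 ≤ β_1, then x̄_2^∞ = ȳ_2 (1−w)(1−p_2^{sb}) λ_2 and P_D = w; (ii) if λ_2 < min{β_4, β_3}, then x̄_2^∞ = (k_{u2} − v_2)^+ (1−w)(1−p_2^{sb}) λ_2 / (1 − (1−p_2^{sb}) λ_2 (1−w)) and P_D = 1; (iii) if λ_2 > max{β_2, β_1}, then x̄_2^∞ = ( (k_{d2} − v_2) w + ȳ_2 (1−w) ) (1−p_2^{sb})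 λ_2 / (1 − (1−p_2^{sb}) w λ_2) and P_D = w; (iv) if β_3 < λ_2 < β_2, then x̄_2^∞ = (l̄_2 − v_2)^+ (1−p_2^{sb}) λ_2 / (1 − (1−p_2^{sb}) λ_2) and P_D = 1. -/
/-!
The right-hand side of the clearing equation is `x ↦ δ (w c(k_d − v + x) + (1 − w) c(k_u − v + x))`
with `c u = min ȳ u⁺` 1-Lipschitz, so for `δ < 1` it is a contraction and Banach's fixed point
theorem gives a unique solution. In each regime one guesses the branch of `c` on which each bank
type sits (down-shocked banks with nothing left or paying partially, up-shocked banks paying in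
full or partially), solves the resulting linear equation, and checks that the conditions on
`λ₂` put that solution on the guessed branches; uniqueness identifies it with the
clearing value.
-/

section
variable {kd ku v ybar w δ : ℝ}

lemma lipschitzWith_min_max_zero (a : ℝ) : LipschitzWith 1 fun u : ℝ => min a (max u 0) :=
  (LipschitzWith.id.max_const 0).const_min a

def clearingMap (kd ku v ybar w δ : ℝ) (x : ℝ) : ℝ :=
  (w * min ybar (max (kd - v + x) 0) + (1 - w) * min ybar (max (ku - v + x) 0)) * δ

lemma clearingEq2_iff_isFixedPt {x : ℝ} :
    clearingEq2 kd ku v ybar w δ x ↔ Function.IsFixedPt (clearingMap kd ku v ybar w δ) x :=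
  eq_comm

lemma dist_clearingMap_le (hw0 : 0 ≤ w) (hw1 : w ≤ 1) (hδ : 0 ≤ δ) (x y : ℝ) :
    dist (clearingMap kd ku v ybar w δ x) (clearingMap kd ku v ybar w δ y) ≤ δ * dist x y := by
  have hclip (c : ℝ) :
      |min ybar (max (c + x) 0) - min ybar (max (c + y) 0)| ≤ |x - y| := by
    simpa [Real.dist_eq] using (lipschitzWith_min_max_zero ybar).dist_le_mul (c + x) (c + y)
  rw [Real.dist_eq, Real.dist_eq, clearingMap, clearingMap, ← sub_mul, abs_mul, abs_of_nonneg hδ,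
    mul_comm δ]
  refine mul_le_mul_of_nonneg_right ?_ hδ
  set dx := min ybar (max (kd - v + x) 0)
  set dy := min ybar (max (kd - v + y) 0)
  set ux := min ybar (max (ku - v + x) 0)
  set uy := min ybar (max (ku - v + y) 0)
  have hw1' : 0 ≤ 1 - w := sub_nonneg.2 hw1
  calc |w * dx + (1 - w) * ux - (w * dy + (1 - w) * uy)|
      = |w * (dx - dy) + (1 - w) * (ux - uy)| := by congr 1; ring
    _ ≤ w * |dx - dy| + (1 - w) * |ux - uy| := by
        simpa only [abs_mul, abs_of_nonneg hw0, abs_of_nonneg hw1'] using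
          abs_add_le (w * (dx - dy)) ((1 - w) * (ux - uy))
    _ ≤ w * |x - y| + (1 - w) * |x - y| :=
        add_le_add (mul_le_mul_of_nonneg_left (hclip _) hw0)
          (mul_le_mul_of_nonneg_left (hclip _) hw1')
    _ = |x - y| := by ring

lemma contractingWith_clearingMap (hw0 : 0 ≤ w) (hw1 : w ≤ 1) (hδ0 : 0 ≤ δ) (hδ1 : δ < 1) :
    ContractingWith ⟨δ, hδ0⟩ (clearingMap kd ku v ybar w δ) :=
  ⟨hδ1, LipschitzWith.of_dist_le_mul (dist_clearingMap_le hw0 hw1 hδ0)⟩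

theorem existsUnique_clearingEq2 (hw0 : 0 ≤ w) (hw1 : w ≤ 1) (hδ0 : 0 ≤ δ) (hδ1 : δ < 1) :
    ∃! x, clearingEq2 kd ku v ybar w δ x := by
  have hf := contractingWith_clearingMap (kd := kd) (ku := ku) (v := v) (ybar := ybar)
    hw0 hw1 hδ0 hδ1
  simp only [clearingEq2_iff_isFixedPt]
  exact ⟨_, hf.fixedPoint_isFixedPt, fun _ hx => hf.fixedPoint_unique hx⟩

lemma clearingEq2_down_zero_up_full (hy : 0 < ybar) (hup : ybar - ku + v ≤ ybar * (1 - w) * δ)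
    (hdown : ybar * (1 - w) * δ ≤ v - kd) :
    clearingEq2 kd ku v ybar w δ (ybar * (1 - w) * δ)
      ∧ defaultProb kd ku v ybar w (ybar * (1 - w) * δ) = w := by
  set t := ybar * (1 - w) * δ
  have hd : kd - v + t ≤ 0 := by linarith
  have hu : ybar ≤ ku - v + t := by linarith
  constructor
  · rw [clearingEq2, max_eq_right hd, min_eq_right hy.le,
      max_eq_left (hy.le.trans hu), min_eq_left hu]
    ring
  · rw [defaultProb, if_neg (by linarith), if_pos hu]

lemma clearingEq2_down_zero_up_partial (hy : 0 < ybar) (hkv : kd ≤ v) (hw0 : 0 ≤ w) (hw1 : w ≤ 1)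
    (hδ0 : 0 ≤ δ) (hδ1 : δ < 1) (hup : ybar * (1 - w) * δ < ybar - ku + v)
    (hdown : (1 - w) * (ku - kd) * δ ≤ v - kd) :
    clearingEq2 kd ku v ybar w δ (max (ku - v) 0 * (1 - w) * δ / (1 - δ * (1 - w)))
      ∧ defaultProb kd ku v ybar w (max (ku - v) 0 * (1 - w) * δ / (1 - δ * (1 - w))) = 1 := by
  have hq : 0 < 1 - δ * (1 - w) := by nlinarith
  have ht := div_mul_cancel₀ (max (ku - v) 0 * (1 - w) * δ) hq.ne'
  have ht0 : 0 ≤ max (ku - v) 0 * (1 - w) * δ / (1 - δ * (1 - w)) :=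
    div_nonneg (mul_nonneg (mul_nonneg (le_max_right _ _) (sub_nonneg.2 hw1)) hδ0) hq.le
  generalize max (ku - v) 0 * (1 - w) * δ / (1 - δ * (1 - w)) = t at ht ht0 ⊢
  rcases le_or_gt ku v with hkuv | hkuv
  · rw [max_eq_right (sub_nonpos.2 hkuv), zero_mul, zero_mul, mul_eq_zero] at ht
    obtain rfl : t = 0 := ht.resolve_right hq.ne'
    rw [clearingEq2, defaultProb, add_zero, add_zero, max_eq_right (sub_nonpos.2 hkv),
      max_eq_right (sub_nonpos.2 hkuv), min_eq_right hy.le, if_neg (by linarith),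
      if_neg (by linarith)]
    exact ⟨by ring, rfl⟩
  · rw [max_eq_left (sub_nonneg.2 hkuv.le)] at ht
    have hd : kd - v + t ≤ 0 := by nlinarith
    have hu : ku - v + t < ybar := by nlinarith
    constructor
    · rw [clearingEq2, max_eq_right hd, min_eq_right hy.le, max_eq_left (by linarith),
        min_eq_right hu.le]
      linear_combination ht
    · rw [defaultProb, if_neg (by linarith), if_neg (by linarith)]

lemma clearingEq2_down_partial_up_full (hy : 0 < ybar) (hkv : kd ≤ v)
    (hδ1 : δ < 1) (hup : ybar + v - ku ≤ (ybar - w * (ku - kd)) * δ)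
    (hdown : v - kd ≤ ybar * (1 - w) * δ) :
    clearingEq2 kd ku v ybar w δ (((kd - v) * w + ybar * (1 - w)) * δ / (1 - δ * w))
      ∧ defaultProb kd ku v ybar w (((kd - v) * w + ybar * (1 - w)) * δ / (1 - δ * w)) = w := by
  -- since `ȳ (1 - w) δ ≥ v - k_d ≥ 0`
  have hwδ : 0 ≤ (1 - w) * δ := by nlinarith
  have hq : 0 < 1 - δ * w := by linarith
  have ht := div_mul_cancel₀ (((kd - v) * w + ybar * (1 - w)) * δ) hq.ne'
  generalize ((kd - v) * w + ybar * (1 - w)) * δ / (1 - δ * w) = t at ht ⊢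
  have hd0 : 0 ≤ kd - v + t := by nlinarith
  have hd : kd - v + t < ybar := by nlinarith
  have hu : ybar ≤ ku - v + t := by nlinarith
  constructor
  · rw [clearingEq2, max_eq_left hd0, min_eq_right hd.le, max_eq_left (hy.le.trans hu),
      min_eq_left hu]
    linear_combination ht
  · rw [defaultProb, if_neg (not_le.2 hd), if_pos hu]

lemma clearingEq2_down_partial_up_partial (hk : kd ≤ ku) (hw1 : w ≤ 1) (hδ1 : δ < 1)
    (hup : (ybar - w * (ku - kd)) * δ < ybar + v - ku)
    (hdown : v - kd ≤ (1 - w) * (ku - kd) * δ) :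
    clearingEq2 kd ku v ybar w δ (max (w * kd + (1 - w) * ku - v) 0 * δ / (1 - δ))
      ∧ defaultProb kd ku v ybar w (max (w * kd + (1 - w) * ku - v) 0 * δ / (1 - δ)) = 1 := by
  have hq : 0 < 1 - δ := sub_pos.2 hδ1
  have hl : 0 ≤ w * kd + (1 - w) * ku - v := by
    nlinarith [mul_nonneg (sub_nonneg.2 hw1) (sub_nonneg.2 hk)]
  have ht := div_mul_cancel₀ (max (w * kd + (1 - w) * ku - v) 0 * δ) hq.ne'
  rw [max_eq_left hl] at ht ⊢
  generalize (w * kd + (1 - w) * ku - v) * δ / (1 - δ) = t at ht ⊢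
  have hd0 : 0 ≤ kd - v + t := by nlinarith
  have hu : ku - v + t < ybar := by nlinarith
  constructor
  · rw [clearingEq2, max_eq_left hd0, min_eq_right (by linarith), max_eq_left (by linarith),
      min_eq_right hu.le]
    linear_combination ht
  · rw [defaultProb, if_neg (by linarith), if_neg (not_le.2 hu)]

end

theorem group2_clearing_large_shock_general
    (kd2 ku2 v2 ybar2 w p2sb lam2 : ℝ)
    (hk : kd2 < ku2) (hy : 0 < ybar2)
    (hw : w ∈ Set.Ioo (0 : ℝ) 1) (hp : p2sb ∈ Set.Ioo (0 : ℝ) 1)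
    (hlam : lam2 ∈ Set.Ioc (0 : ℝ) 1)
    (hkv : kd2 < v2) (hybig : w * (ku2 - kd2) < ybar2) :
    (∃! x : ℝ, clearingEq2 kd2 ku2 v2 ybar2 w ((1 - p2sb) * lam2) x)
    ∧ ∀ x : ℝ, clearingEq2 kd2 ku2 v2 ybar2 w ((1 - p2sb) * lam2) x →
        (((ybar2 - ku2 + v2) / (ybar2 * (1 - w) * (1 - p2sb)) < lam2
            ∧ lam2 ≤ (v2 - kd2) / (ybar2 * (1 - w) * (1 - p2sb)) →
            x = ybar2 * (1 - w) * (1 - p2sb) * lam2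
            ∧ defaultProb kd2 ku2 v2 ybar2 w x = w)
        ∧ (lam2 < min ((ybar2 - ku2 + v2) / (ybar2 * (1 - w) * (1 - p2sb)))
              ((v2 - kd2) / ((1 - w) * (ku2 - kd2) * (1 - p2sb))) →
            x = max (ku2 - v2) 0 * (1 - w) * (1 - p2sb) * lam2
                  / (1 - (1 - p2sb) * lam2 * (1 - w))
            ∧ defaultProb kd2 ku2 v2 ybar2 w x = 1)
        ∧ (max ((ybar2 + v2 - ku2) / ((ybar2 - w * (ku2 - kd2)) * (1 - p2sb)))
              ((v2 - kd2) / (ybar2 * (1 - w) * (1 - p2sb))) < lam2 →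
            x = ((kd2 - v2) * w + ybar2 * (1 - w)) * (1 - p2sb) * lam2
                  / (1 - (1 - p2sb) * w * lam2)
            ∧ defaultProb kd2 ku2 v2 ybar2 w x = w)
        ∧ ((v2 - kd2) / ((1 - w) * (ku2 - kd2) * (1 - p2sb)) < lam2
            ∧ lam2 < (ybar2 + v2 - ku2) / ((ybar2 - w * (ku2 - kd2)) * (1 - p2sb)) →
            x = max (w * kd2 + (1 - w) * ku2 - v2) 0 * (1 - p2sb) * lam2
                  / (1 - (1 - p2sb) * lam2)
            ∧ defaultProb kd2 ku2 v2 ybar2 w x = 1)) := by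
  obtain ⟨hw0, hw1⟩ := hw
  obtain ⟨hp0, hp1⟩ := hp
  obtain ⟨hl0, hl1⟩ := hlam
  have hδ0 : 0 ≤ (1 - p2sb) * lam2 := mul_nonneg (sub_nonneg.2 hp1.le) hl0.le
  have hδ1 : (1 - p2sb) * lam2 < 1 := by nlinarith
  have hden₁ : 0 < ybar2 * (1 - w) * (1 - p2sb) :=
    mul_pos (mul_pos hy (sub_pos.2 hw1)) (sub_pos.2 hp1)
  have hden₂ : 0 < (ybar2 - w * (ku2 - kd2)) * (1 - p2sb) :=
    mul_pos (sub_pos.2 hybig) (sub_pos.2 hp1)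
  have hden₃ : 0 < (1 - w) * (ku2 - kd2) * (1 - p2sb) :=
    mul_pos (mul_pos (sub_pos.2 hw1) (sub_pos.2 hk)) (sub_pos.2 hp1)
  have huniq := existsUnique_clearingEq2 (kd := kd2) (ku := ku2) (v := v2) (ybar := ybar2)
    hw0.le hw1.le hδ0 hδ1
  refine ⟨huniq, fun x hx => ?_⟩
  have hsol (t P : ℝ) (ht : clearingEq2 kd2 ku2 v2 ybar2 w ((1 - p2sb) * lam2) t
      ∧ defaultProb kd2 ku2 v2 ybar2 w t = P) : x = t ∧ defaultProb kd2 ku2 v2 ybar2 w x = P := by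
    obtain rfl := huniq.unique hx ht.1
    exact ⟨rfl, ht.2⟩
  refine ⟨?_, ?_, ?_, ?_⟩
  · rw [div_lt_iff₀ hden₁, le_div_iff₀ hden₁]
    rintro ⟨h₄, h₁⟩
    obtain ⟨rfl, hP⟩ := hsol _ _ (clearingEq2_down_zero_up_full hy (by linarith) (by linarith))
    exact ⟨by ring, hP⟩
  · rw [lt_min_iff, lt_div_iff₀ hden₁, lt_div_iff₀ hden₃]
    rintro ⟨h₄, h₃⟩
    obtain ⟨rfl, hP⟩ := hsol _ _ (clearingEq2_down_zero_up_partial hy hkv.le hw0.le hw1.le hδ0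
      hδ1 (by linarith) (by linarith))
    exact ⟨by ring, hP⟩
  · rw [max_lt_iff, div_lt_iff₀ hden₂, div_lt_iff₀ hden₁]
    rintro ⟨h₂, h₁⟩
    obtain ⟨rfl, hP⟩ := hsol _ _ (clearingEq2_down_partial_up_full hy hkv.le hδ1 (by linarith)
      (by linarith))
    exact ⟨by ring, hP⟩
  · rw [div_lt_iff₀ hden₃, lt_div_iff₀ hden₂]
    rintro ⟨h₃, h₂⟩
    obtain ⟨rfl, hP⟩ := hsol _ _ (clearingEq2_down_partial_up_partial hk.le hw1.le hδ1
      (by linarith) (by linarith))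
    exact ⟨by ring, hP⟩

/-- **Group-2 clearing vector and default probability, large-shock case `v_2 > k_{d2}`.**
Assuming `v₂ > k_{d2}`, `k_{d2} < k_{u2}` and `ȳ₂ > w (k_{u2} − k_{d2})`, the limit
clearing equation has a unique solution, given by the four-case closed form with
thresholds `β₁, β₂, β₃, β₄`. -/
theorem group2_clearing_large_shock
    (kd2 ku2 v2 ybar2 w p2sb lam2 : ℝ)
    (hk : kd2 < ku2) (hv : 0 ≤ v2) (hy : 0 < ybar2)
    (hw : w ∈ Set.Ioo (0 : ℝ) 1) (hp : p2sb ∈ Set.Ioo (0 : ℝ) 1)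
    (hlam : lam2 ∈ Set.Ioc (0 : ℝ) 1)
    (hkv : kd2 < v2) (hybig : w * (ku2 - kd2) < ybar2) :
    (∃! x : ℝ, clearingEq2 kd2 ku2 v2 ybar2 w ((1 - p2sb) * lam2) x)
    ∧ ∀ x : ℝ, clearingEq2 kd2 ku2 v2 ybar2 w ((1 - p2sb) * lam2) x →
        (((ybar2 - ku2 + v2) / (ybar2 * (1 - w) * (1 - p2sb)) < lam2
            ∧ lam2 ≤ (v2 - kd2) / (ybar2 * (1 - w) * (1 - p2sb)) →
            x = ybar2 * (1 - w) * (1 - p2sb) * lam2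
            ∧ defaultProb kd2 ku2 v2 ybar2 w x = w)
        ∧ (lam2 < min ((ybar2 - ku2 + v2) / (ybar2 * (1 - w) * (1 - p2sb)))
              ((v2 - kd2) / ((1 - w) * (ku2 - kd2) * (1 - p2sb))) →
            x = max (ku2 - v2) 0 * (1 - w) * (1 - p2sb) * lam2
                  / (1 - (1 - p2sb) * lam2 * (1 - w))
            ∧ defaultProb kd2 ku2 v2 ybar2 w x = 1)
        ∧ (max ((ybar2 + v2 - ku2) / ((ybar2 - w * (ku2 - kd2)) * (1 - p2sb)))
              ((v2 - kd2) / (ybar2 * (1 - w) * (1 - p2sb))) < lam2 →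
            x = ((kd2 - v2) * w + ybar2 * (1 - w)) * (1 - p2sb) * lam2
                  / (1 - (1 - p2sb) * w * lam2)
            ∧ defaultProb kd2 ku2 v2 ybar2 w x = w)
        ∧ ((v2 - kd2) / ((1 - w) * (ku2 - kd2) * (1 - p2sb)) < lam2
            ∧ lam2 < (ybar2 + v2 - ku2) / ((ybar2 - w * (ku2 - kd2)) * (1 - p2sb)) →
            x = max (w * kd2 + (1 - w) * ku2 - v2) 0 * (1 - p2sb) * lam2
                  / (1 - (1 - p2sb) * lam2)
            ∧ defaultProb kd2 ku2 v2 ybar2 w x = 1)) :=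
  group2_clearing_large_shock_general kd2 ku2 v2 ybar2 w p2sb lam2 hk hy hw hp hlam hkv hybig
end

section
/- Let γ ∈ (0,1), k_0 > 0, y_1 > 0, y_2 > 0, y_c ≥ 0, κ > 0, d_c ≥ 0, and d < r_1 < r_2; let p_1^{sb}, p_2^{sb} ∈ (0,1) satisfy y_1 p_1^{sb} < y_2 p_2^{sb}, and assume Ω_1 := k_0 + y_1 p_1^{sb} − ((1−γ)/γ) y_c ≥ 0. Define Ω_2 := k_0 + y_2 p_2^{sb} + y_c, v_m := κ Ω_m, k_{dm} := Ω_m (1 + d − d_c) for m = 1,2, ȳ_1 := y_1 (1 + r_1), ȳ_2 := (y_2 + y_c)(1 + r_2) and λ_2 := y_2 / (y_2 + y_c). If group 2 is resilient, i.e., k_{d2} − v_2 + ȳ_2 λ_2 (1 − p_2^{sb}) ≥ ȳ_2, then group 1 is resilient, i.e., k_{d1} − v_1 + ȳ_1 (1 − p_1^{sb}) + (1 + r_2) y_c (1−γ)/γ ≥ ȳ_1. -/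
/-!
Write `δ = d - d_c - κ` for the net downward return rate after tax, so that a shocked bank
keeps `Ω (1 + δ)`. Clearing the liabilities, both resilience conditions become linear:
group 2 is resilient iff `(r₂ - δ)(y₂ p₂ + y_c) ≤ (1 + δ) k₀`, and group 1 is resilient iff
`(r₁ - δ) y₁ p₁ ≤ (1 + δ) k₀ + (r₂ - δ) y_c (1 - γ)/γ`. Since `δ < r₁ < r₂` and
`y₁ p₁ < y₂ p₂`, the left side for group 1 is at most the left side for group 2, and the
extra term on the right for group 1 is nonnegative.
-/

theorem group2_resilient_iff {k0 y2 yc r2 p2 δ : ℝ} (hy : y2 + yc ≠ 0) :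
    (y2 + yc) * (1 + r2) ≤
        (k0 + y2 * p2 + yc) * (1 + δ) + (y2 + yc) * (1 + r2) * (y2 / (y2 + yc)) * (1 - p2) ↔
      (r2 - δ) * (y2 * p2 + yc) ≤ (1 + δ) * k0 := by
  have hlam : (y2 + yc) * (1 + r2) * (y2 / (y2 + yc)) = y2 * (1 + r2) := by
    field_simp
  rw [hlam]
  constructor <;> intro h <;> linarith

theorem group1_resilient_iff {k0 y1 yc r1 r2 p1 g δ : ℝ} :
    y1 * (1 + r1) ≤
        (k0 + y1 * p1 - g * yc) * (1 + δ) + y1 * (1 + r1) * (1 - p1) + (1 + r2) * yc * g ↔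
      (r1 - δ) * (y1 * p1) ≤ (1 + δ) * k0 + (r2 - δ) * (g * yc) := by
  constructor <;> intro h <;> linarith

theorem group1_resilient_of_group2_resilient_general
    (γ k0 y1 y2 yc κ dc d r1 r2 p1sb p2sb : ℝ)
    (hγ : γ ∈ Set.Ioo (0 : ℝ) 1) (hy2 : 0 < y2)
    (hyc : 0 ≤ yc) (hκ : 0 < κ) (hdc : 0 ≤ dc) (hdr1 : d < r1) (hr12 : r1 < r2)
    (hp2 : p2sb ∈ Set.Ioo (0 : ℝ) 1)
    (hyp : y1 * p1sb < y2 * p2sb)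
    (Ω1 Ω2 v1 v2 kd1 kd2 ybar1 ybar2 lam2 : ℝ)
    (hΩ1 : Ω1 = k0 + y1 * p1sb - ((1 - γ) / γ) * yc)
    (hΩ2 : Ω2 = k0 + y2 * p2sb + yc)
    (hv1 : v1 = κ * Ω1) (hv2 : v2 = κ * Ω2)
    (hkd1 : kd1 = Ω1 * (1 + d - dc)) (hkd2 : kd2 = Ω2 * (1 + d - dc))
    (hybar1 : ybar1 = y1 * (1 + r1)) (hybar2 : ybar2 = (y2 + yc) * (1 + r2))
    (hlam2 : lam2 = y2 / (y2 + yc))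
    (hres2 : ybar2 ≤ kd2 - v2 + ybar2 * lam2 * (1 - p2sb)) :
    ybar1 ≤ kd1 - v1 + ybar1 * (1 - p1sb) + (1 + r2) * yc * (1 - γ) / γ := by
  set δ := d - dc - κ
  have hkv1 : kd1 - v1 = Ω1 * (1 + δ) := by rw [hkd1, hv1]; ring
  have hkv2 : kd2 - v2 = Ω2 * (1 + δ) := by rw [hkd2, hv2]; ring
  rw [hkv2, hΩ2, hybar2, hlam2, group2_resilient_iff (by positivity)] at hres2
  rw [hkv1, hΩ1, hybar1, mul_div_assoc, group1_resilient_iff]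
  have hδr1 : 0 ≤ r1 - δ := by linarith
  have hδr2 : 0 ≤ r2 - δ := by linarith
  have hg : 0 ≤ (1 - γ) / γ := div_nonneg (by linarith [hγ.2]) hγ.1.le
  have hexposure2 : 0 ≤ y2 * p2sb + yc := by linarith [mul_pos hy2 hp2.1]
  calc (r1 - δ) * (y1 * p1sb)
      ≤ (r1 - δ) * (y2 * p2sb + yc) := mul_le_mul_of_nonneg_left (by linarith) hδr1
    _ ≤ (r2 - δ) * (y2 * p2sb + yc) := mul_le_mul_of_nonneg_right (by linarith) hexposure2
    _ ≤ (1 + δ) * k0 := hres2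
    _ ≤ (1 + δ) * k0 + (r2 - δ) * ((1 - γ) / γ * yc) := by
        have := mul_nonneg hδr2 (mul_nonneg hg hyc)
        linarith

/-- **Group 1 is more robust than group 2.**
With proportional taxes `v = κΩ` and `y₁ p₁^{sb} < y₂ p₂^{sb}`, if group 2 is resilient
then so is group 1. -/
theorem group1_resilient_of_group2_resilient
    (γ k0 y1 y2 yc κ dc d r1 r2 p1sb p2sb : ℝ)
    (hγ : γ ∈ Set.Ioo (0 : ℝ) 1) (hk0 : 0 < k0) (hy1 : 0 < y1) (hy2 : 0 < y2)
    (hyc : 0 ≤ yc) (hκ : 0 < κ) (hdc : 0 ≤ dc) (hdr1 : d < r1) (hr12 : r1 < r2)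
    (hp1 : p1sb ∈ Set.Ioo (0 : ℝ) 1) (hp2 : p2sb ∈ Set.Ioo (0 : ℝ) 1)
    (hyp : y1 * p1sb < y2 * p2sb)
    (Ω1 Ω2 v1 v2 kd1 kd2 ybar1 ybar2 lam2 : ℝ)
    (hΩ1 : Ω1 = k0 + y1 * p1sb - ((1 - γ) / γ) * yc) (hΩ1pos : 0 ≤ Ω1)
    (hΩ2 : Ω2 = k0 + y2 * p2sb + yc)
    (hv1 : v1 = κ * Ω1) (hv2 : v2 = κ * Ω2)
    (hkd1 : kd1 = Ω1 * (1 + d - dc)) (hkd2 : kd2 = Ω2 * (1 + d - dc))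
    (hybar1 : ybar1 = y1 * (1 + r1)) (hybar2 : ybar2 = (y2 + yc) * (1 + r2))
    (hlam2 : lam2 = y2 / (y2 + yc))
    (hres2 : ybar2 ≤ kd2 - v2 + ybar2 * lam2 * (1 - p2sb)) :
    ybar1 ≤ kd1 - v1 + ybar1 * (1 - p1sb) + (1 + r2) * yc * (1 - γ) / γ :=
  group1_resilient_of_group2_resilient_general γ k0 y1 y2 yc κ dc d r1 r2 p1sb p2sb hγ hy2 hyc hκ
    hdc hdr1 hr12 hp2 hyp Ω1 Ω2 v1 v2 kd1 kd2 ybar1 ybar2 lam2 hΩ1 hΩ2 hv1 hv2 hkd1 hkd2 hybar1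
    hybar2 hlam2 hres2
end

section
/- Under the resilient-regime financial setup with proportional taxes, the following closed forms hold: E[S_1] = k_0 (1 + r̄_r − (d_c + κ)) − ((1−γ)/γ) y_c (Δ_r − d_c − κ) + y_1 p_1^{sb} (r̄_r − d_c − κ − r_1); E[S_2] = k_0 (1 + r̄_r − (d_c + κ)) + (y_2 p_2^{sb} + y_c)(Δ_r − d_c − κ); Ŝ_{2,u} = k_0 (1 + u − d_c − κ) + (y_2 p_2^{sb} + y_c)(Δ_u − (d_c + κ)); and consequently E[S_2] − E[S_1] = (Δ_r − (d_c + κ))(y_2 p_2^{sb} + y_c/γ) − y_1 p_1^{sb} (r̄_r − d_c − κ − r_1). -/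
/-!
In the resilient regime every group stays solvent even after a downward shock, and since its
capital `Ω` is nonnegative its surplus only grows with the realised return. Hence both positive
parts in the expected surplus are inactive, and because the surplus is affine in the return, its
expectation is the surplus at the mean return `r̄_r`. The closed forms are then an algebraic
rearrangement, and the difference of the two expectations uses `1 + (1 - γ) / γ = 1 / γ`.
-/

namespace ResilientRegime

/-- In the paper's notation this is `k − v + c` with `k = Ω (1 + ρ − d_c)` and `v = κ Ω`;
`c` collects the terms that do not depend on the return `ρ`. -/
def surplus (Ω dc κ c ρ : ℝ) : ℝ := Ω * (1 + ρ - dc) - κ * Ω + c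

variable {Ω dc κ c : ℝ}

lemma surplus_monotone (hΩ : 0 ≤ Ω) : Monotone (surplus Ω dc κ c) := fun ρ ρ' h => by
  unfold surplus
  nlinarith

lemma surplus_two_point_mean (w ρd ρu : ℝ) :
    w * surplus Ω dc κ c ρd + (1 - w) * surplus Ω dc κ c ρu
      = surplus Ω dc κ c (ρu * (1 - w) + ρd * w) := by
  unfold surplus
  ring

theorem expected_max_surplus_eq_of_nonneg_down {d u : ℝ} (hΩ : 0 ≤ Ω) (hdu : d ≤ u)
    (hd : 0 ≤ surplus Ω dc κ c d) (w : ℝ) :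
    w * max (surplus Ω dc κ c d) 0 + (1 - w) * max (surplus Ω dc κ c u) 0
      = surplus Ω dc κ c (u * (1 - w) + d * w) := by
  have hu : 0 ≤ surplus Ω dc κ c u := hd.trans (surplus_monotone hΩ hdu)
  rw [max_eq_left hd, max_eq_left hu, surplus_two_point_mean]

lemma surplus_group1 (k0 y1 yc γ p1sb r1 r2 ρ : ℝ) :
    surplus (k0 + y1 * p1sb - ((1 - γ) / γ) * yc) dc κ
        (y1 * (1 + r1) * (1 - p1sb) + (1 + r2) * yc * (1 - γ) / γ - y1 * (1 + r1)) ρ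
      = k0 * (1 + ρ - (dc + κ)) - ((1 - γ) / γ) * yc * (ρ - r2 - dc - κ)
          + y1 * p1sb * (ρ - dc - κ - r1) := by
  unfold surplus
  ring

lemma surplus_group2 {y2 yc : ℝ} (hy : y2 + yc ≠ 0) (k0 p2sb r2 ρ : ℝ) :
    surplus (k0 + y2 * p2sb + yc) dc κ
        ((y2 + yc) * (1 + r2) * (y2 / (y2 + yc)) * (1 - p2sb) - (y2 + yc) * (1 + r2)) ρ
      = k0 * (1 + ρ - (dc + κ)) + (y2 * p2sb + yc) * (ρ - r2 - dc - κ) := by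
  unfold surplus
  field_simp
  ring

end ResilientRegime

open ResilientRegime in
theorem resilient_regime_surplus_closed_forms_general
    (γ k0 y1 y2 yc κ dc d u w r1 r2 p1sb p2sb : ℝ)
    (hγ : γ ∈ Set.Ioo (0 : ℝ) 1) (hk0 : 0 < k0) (hy2 : 0 < y2)
    (hyc : 0 ≤ yc) (hdu : d < u)
    (hp2 : p2sb ∈ Set.Ioo (0 : ℝ) 1)
    (Ω1 Ω2 v1 v2 ku1 kd1 ku2 kd2 ybar1 ybar2 lam2 rbar Δu Δr : ℝ)
    (hΩ1 : Ω1 = k0 + y1 * p1sb - ((1 - γ) / γ) * yc) (hΩ1pos : 0 ≤ Ω1)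
    (hΩ2 : Ω2 = k0 + y2 * p2sb + yc)
    (hv1 : v1 = κ * Ω1) (hv2 : v2 = κ * Ω2)
    (hku1 : ku1 = Ω1 * (1 + u - dc)) (hkd1 : kd1 = Ω1 * (1 + d - dc))
    (hku2 : ku2 = Ω2 * (1 + u - dc)) (hkd2 : kd2 = Ω2 * (1 + d - dc))
    (hybar1 : ybar1 = y1 * (1 + r1)) (hybar2 : ybar2 = (y2 + yc) * (1 + r2))
    (hlam2 : lam2 = y2 / (y2 + yc))
    (hrbar : rbar = u * (1 - w) + d * w) (hΔu : Δu = u - r2) (hΔr : Δr = rbar - r2)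
    (hres1 : ybar1 ≤ kd1 - v1 + ybar1 * (1 - p1sb) + (1 + r2) * yc * (1 - γ) / γ)
    (hres2 : ybar2 ≤ kd2 - v2 + ybar2 * lam2 * (1 - p2sb))
    (ES1 ES2 S2u : ℝ)
    (hES1 : ES1 = w * max (kd1 + ybar1 * (1 - p1sb) + (1 + r2) * yc * (1 - γ) / γ
                            - v1 - ybar1) 0
                  + (1 - w) * max (ku1 + ybar1 * (1 - p1sb) + (1 + r2) * yc * (1 - γ) / γ
                            - v1 - ybar1) 0)
    (hES2 : ES2 = w * max (kd2 + ybar2 * lam2 * (1 - p2sb) - v2 - ybar2) 0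
                  + (1 - w) * max (ku2 + ybar2 * lam2 * (1 - p2sb) - v2 - ybar2) 0)
    (hS2u : S2u = max (ku2 + ybar2 * lam2 * (1 - p2sb) - v2 - ybar2) 0) :
    ES1 = k0 * (1 + rbar - (dc + κ)) - ((1 - γ) / γ) * yc * (Δr - dc - κ)
            + y1 * p1sb * (rbar - dc - κ - r1)
    ∧ ES2 = k0 * (1 + rbar - (dc + κ)) + (y2 * p2sb + yc) * (Δr - dc - κ)
    ∧ S2u = k0 * (1 + u - dc - κ) + (y2 * p2sb + yc) * (Δu - (dc + κ))
    ∧ ES2 - ES1 = (Δr - (dc + κ)) * (y2 * p2sb + yc / γ)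
            - y1 * p1sb * (rbar - dc - κ - r1) := by
  have hΩ2pos : 0 ≤ Ω2 := by rw [hΩ2]; have := hp2.1; positivity
  have hsum : y2 + yc ≠ 0 := by positivity
  set c1 := ybar1 * (1 - p1sb) + (1 + r2) * yc * (1 - γ) / γ - ybar1
  set c2 := ybar2 * lam2 * (1 - p2sb) - ybar2
  have hs1 : ∀ ρ, Ω1 * (1 + ρ - dc) + ybar1 * (1 - p1sb) + (1 + r2) * yc * (1 - γ) / γ
      - v1 - ybar1 = surplus Ω1 dc κ c1 ρ := fun ρ => by rw [hv1, surplus]; ring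
  have hs2 : ∀ ρ, Ω2 * (1 + ρ - dc) + ybar2 * lam2 * (1 - p2sb) - v2 - ybar2
      = surplus Ω2 dc κ c2 ρ := fun ρ => by rw [hv2, surplus]; ring
  rw [hkd1, hku1, hs1, hs1] at hES1
  rw [hkd2, hku2, hs2, hs2] at hES2
  rw [hku2, hs2] at hS2u
  have hd1 : 0 ≤ surplus Ω1 dc κ c1 d := by rw [← hs1, ← hkd1]; linarith
  have hd2 : 0 ≤ surplus Ω2 dc κ c2 d := by rw [← hs2, ← hkd2]; linarith
  rw [expected_max_surplus_eq_of_nonneg_down hΩ1pos hdu.le hd1, ← hrbar] at hES1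
  rw [expected_max_surplus_eq_of_nonneg_down hΩ2pos hdu.le hd2, ← hrbar] at hES2
  rw [max_eq_left (hd2.trans (surplus_monotone hΩ2pos hdu.le))] at hS2u
  subst hΩ1 hΩ2 hybar1 hybar2 hlam2 hΔu hΔr
  rw [surplus_group1] at hES1
  rw [surplus_group2 hsum] at hES2 hS2u
  refine ⟨hES1, hES2, by rw [hS2u]; ring, ?_⟩
  rw [hES1, hES2]
  field_simp [hγ.1.ne']
  ring

/-- **Closed forms of expected surpluses in the resilient regime with proportional
taxes.**  Under the resilient-regime hypotheses, the limiting expected surpluses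
`E[S₁]`, `E[S₂]` and the surplus at upward movement `Ŝ_{2,u}` have the stated
closed forms, and `E[S₂] − E[S₁] = (Δ_r − (d_c+κ))(y₂ p₂^{sb} + y_c/γ)
− y₁ p₁^{sb}(r̄_r − d_c − κ − r₁)`. -/
theorem resilient_regime_surplus_closed_forms
    (γ k0 y1 y2 yc κ dc d u w r1 r2 p1sb p2sb : ℝ)
    (hγ : γ ∈ Set.Ioo (0 : ℝ) 1) (hk0 : 0 < k0) (hy1 : 0 < y1) (hy2 : 0 < y2)
    (hyc : 0 ≤ yc) (hdu : d < u) (hw : w ∈ Set.Ioo (0 : ℝ) 1)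
    (hp1 : p1sb ∈ Set.Ioo (0 : ℝ) 1) (hp2 : p2sb ∈ Set.Ioo (0 : ℝ) 1)
    (Ω1 Ω2 v1 v2 ku1 kd1 ku2 kd2 ybar1 ybar2 lam2 rbar Δu Δr : ℝ)
    (hΩ1 : Ω1 = k0 + y1 * p1sb - ((1 - γ) / γ) * yc) (hΩ1pos : 0 ≤ Ω1)
    (hΩ2 : Ω2 = k0 + y2 * p2sb + yc)
    (hv1 : v1 = κ * Ω1) (hv2 : v2 = κ * Ω2)
    (hku1 : ku1 = Ω1 * (1 + u - dc)) (hkd1 : kd1 = Ω1 * (1 + d - dc))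
    (hku2 : ku2 = Ω2 * (1 + u - dc)) (hkd2 : kd2 = Ω2 * (1 + d - dc))
    (hybar1 : ybar1 = y1 * (1 + r1)) (hybar2 : ybar2 = (y2 + yc) * (1 + r2))
    (hlam2 : lam2 = y2 / (y2 + yc))
    (hrbar : rbar = u * (1 - w) + d * w) (hΔu : Δu = u - r2) (hΔr : Δr = rbar - r2)
    (hres1 : ybar1 ≤ kd1 - v1 + ybar1 * (1 - p1sb) + (1 + r2) * yc * (1 - γ) / γ)
    (hres2 : ybar2 ≤ kd2 - v2 + ybar2 * lam2 * (1 - p2sb))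
    (ES1 ES2 S2u : ℝ)
    (hES1 : ES1 = w * max (kd1 + ybar1 * (1 - p1sb) + (1 + r2) * yc * (1 - γ) / γ
                            - v1 - ybar1) 0
                  + (1 - w) * max (ku1 + ybar1 * (1 - p1sb) + (1 + r2) * yc * (1 - γ) / γ
                            - v1 - ybar1) 0)
    (hES2 : ES2 = w * max (kd2 + ybar2 * lam2 * (1 - p2sb) - v2 - ybar2) 0
                  + (1 - w) * max (ku2 + ybar2 * lam2 * (1 - p2sb) - v2 - ybar2) 0)
    (hS2u : S2u = max (ku2 + ybar2 * lam2 * (1 - p2sb) - v2 - ybar2) 0) :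
    ES1 = k0 * (1 + rbar - (dc + κ)) - ((1 - γ) / γ) * yc * (Δr - dc - κ)
            + y1 * p1sb * (rbar - dc - κ - r1)
    ∧ ES2 = k0 * (1 + rbar - (dc + κ)) + (y2 * p2sb + yc) * (Δr - dc - κ)
    ∧ S2u = k0 * (1 + u - dc - κ) + (y2 * p2sb + yc) * (Δu - (dc + κ))
    ∧ ES2 - ES1 = (Δr - (dc + κ)) * (y2 * p2sb + yc / γ)
            - y1 * p1sb * (rbar - dc - κ - r1) :=
  resilient_regime_surplus_closed_forms_general γ k0 y1 y2 yc κ dc d u w r1 r2 p1sb p2sb hγ hk0 hy2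
    hyc hdu hp2 Ω1 Ω2 v1 v2 ku1 kd1 ku2 kd2 ybar1 ybar2 lam2 rbar Δu Δr hΩ1 hΩ1pos hΩ2 hv1 hv2 hku1
    hkd1 hku2 hkd2 hybar1 hybar2 hlam2 hrbar hΔu hΔr hres1 hres2 ES1 ES2 S2u hES1 hES2 hS2u
end

section
/- Under the resilient-regime financial setup with proportional taxes: (a) if Δ_r ≤ d_c + κ, r_1 < r_2, and y_1 p_1^{sb} ≤ y_2 p_2^{sb} + y_c/γ, then E[S_1] ≥ E[S_2]; (b) viewing all parameters except y_c as fixed, the resilient-regime closed form of E[S_1] is an affine function of y_c with slope ((1−γ)/γ)(d_c + κ − Δ_r), so E[S_1] is strictly increasing in y_c if and only if Δ_r < d_c + κ, and is constant in y_c if and only if Δ_r = d_c + κ; (c) the resilient-regime closed form of Ŝ_{2,u} is an affine function of y_c with slope Δ_u − (d_c + κ), so Ŝ_{2,u} is strictly increasing in y_c if and only if Δ_u > d_c + κ, and is constant in y_c if and only if Δ_u = d_c + κ. -/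
/-! Every surplus is affine in `y_c`, so its monotonicity and constancy on `[0, ∞)` are read off
the sign of the slope, and `(1 - γ)/γ > 0` lets the slope of `E[S₁]` be replaced by
`d_c + κ - Δ_r`. For (a), substituting `r̄_r = Δ_r + r₂` gives
`E[S₁] - E[S₂] = (d_c + κ - Δ_r)(y₂ p₂^{sb} + y_c/γ - y₁ p₁^{sb}) + y₁ p₁^{sb} (r₂ - r₁)`,
a sum of two nonnegative terms. -/

section Affine

variable {𝕜 : Type*} [Field 𝕜] [LinearOrder 𝕜] [IsStrictOrderedRing 𝕜] {f : 𝕜 → 𝕜} {m : 𝕜}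

theorem strictMonoOn_Ici_zero_iff_of_affine (hf : ∀ t, f t = f 0 + m * t) :
    StrictMonoOn f (Set.Ici 0) ↔ 0 < m := by
  refine ⟨fun h => ?_, fun hm a _ b _ hab => ?_⟩
  · have h01 := h (Set.mem_Ici.2 le_rfl) (Set.mem_Ici.2 zero_le_one) zero_lt_one
    rw [hf 1] at h01
    linarith
  · rw [hf a, hf b]
    gcongr

theorem forall_mem_Ici_apply_eq_apply_zero_iff_of_affine (hf : ∀ t, f t = f 0 + m * t) :
    (∀ t ∈ Set.Ici (0 : 𝕜), f t = f 0) ↔ m = 0 := by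
  refine ⟨fun h => ?_, fun hm t _ => by rw [hf t, hm, zero_mul, add_zero]⟩
  have h1 := h 1 (Set.mem_Ici.2 zero_le_one)
  rw [hf 1] at h1
  linarith

end Affine

theorem resilient_regime_surplus_trends_general
    (γ k0 y1 y2 yc κ dc u r1 r2 p1sb p2sb : ℝ)
    (hγ : γ ∈ Set.Ioo (0 : ℝ) 1) (hy1 : 0 < y1)
    (hp1 : p1sb ∈ Set.Ioo (0 : ℝ) 1)
    (rbar Δu Δr : ℝ)
    (hΔr : Δr = rbar - r2)
    (ES1 ES2 S2u : ℝ → ℝ)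
    (hES1 : ∀ t : ℝ, ES1 t = k0 * (1 + rbar - (dc + κ)) - ((1 - γ) / γ) * t * (Δr - dc - κ)
                + y1 * p1sb * (rbar - dc - κ - r1))
    (hES2 : ∀ t : ℝ, ES2 t = k0 * (1 + rbar - (dc + κ)) + (y2 * p2sb + t) * (Δr - dc - κ))
    (hS2u : ∀ t : ℝ, S2u t = k0 * (1 + u - dc - κ) + (y2 * p2sb + t) * (Δu - (dc + κ))) :
    -- (a)
    ((Δr ≤ dc + κ ∧ r1 < r2 ∧ y1 * p1sb ≤ y2 * p2sb + yc / γ) → ES2 yc ≤ ES1 yc)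
    -- (b)
    ∧ (∀ t : ℝ, ES1 t = ES1 0 + ((1 - γ) / γ) * (dc + κ - Δr) * t)
    ∧ (StrictMonoOn ES1 (Set.Ici 0) ↔ Δr < dc + κ)
    ∧ ((∀ t ∈ Set.Ici (0 : ℝ), ES1 t = ES1 0) ↔ Δr = dc + κ)
    -- (c)
    ∧ (∀ t : ℝ, S2u t = S2u 0 + (Δu - (dc + κ)) * t)
    ∧ (StrictMonoOn S2u (Set.Ici 0) ↔ dc + κ < Δu)
    ∧ ((∀ t ∈ Set.Ici (0 : ℝ), S2u t = S2u 0) ↔ Δu = dc + κ) := by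
  obtain ⟨hγ0, hγ1⟩ := hγ
  have hfactor : 0 < (1 - γ) / γ := div_pos (by linarith) hγ0
  have hES1_affine : ∀ t, ES1 t = ES1 0 + ((1 - γ) / γ) * (dc + κ - Δr) * t := fun t => by
    rw [hES1, hES1]; ring
  have hS2u_affine : ∀ t, S2u t = S2u 0 + (Δu - (dc + κ)) * t := fun t => by
    rw [hS2u, hS2u]; ring
  refine ⟨?_, hES1_affine, ?_, ?_, hS2u_affine, ?_, ?_⟩
  · rintro ⟨hΔr_le, hr, hy⟩
    have gap : ES1 yc - ES2 yc
        = (dc + κ - Δr) * (y2 * p2sb + yc / γ - y1 * p1sb) + y1 * p1sb * (r2 - r1) := by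
      rw [hES1, hES2, show rbar = Δr + r2 by linarith]
      field_simp
      ring
    have hy1p1 : 0 ≤ y1 * p1sb := mul_nonneg hy1.le hp1.1.le
    linarith [mul_nonneg (sub_nonneg.2 hΔr_le) (sub_nonneg.2 hy),
      mul_nonneg hy1p1 (sub_nonneg.2 hr.le)]
  · rw [strictMonoOn_Ici_zero_iff_of_affine hES1_affine, mul_pos_iff_of_pos_left hfactor, sub_pos]
  · rw [forall_mem_Ici_apply_eq_apply_zero_iff_of_affine hES1_affine, mul_eq_zero_iff_left hfactor.ne',
      sub_eq_zero, eq_comm]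
  · rw [strictMonoOn_Ici_zero_iff_of_affine hS2u_affine, sub_pos]
  · rw [forall_mem_Ici_apply_eq_apply_zero_iff_of_affine hS2u_affine, sub_eq_zero]

/-- **Comparison and monotonicity of surpluses in the resilient regime.**
(a) If `Δ_r ≤ d_c + κ`, `r₁ < r₂`, and `y₁ p₁^{sb} ≤ y₂ p₂^{sb} + y_c/γ`, then
`E[S₁] ≥ E[S₂]` (closed forms).
(b) The closed form of `E[S₁]` is affine in `y_c` with slope
`((1−γ)/γ)(d_c + κ − Δ_r)`; it is strictly increasing in `y_c` iff `Δ_r < d_c + κ`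
and constant iff `Δ_r = d_c + κ`.
(c) The closed form of `Ŝ_{2,u}` is affine in `y_c` with slope `Δ_u − (d_c + κ)`;
it is strictly increasing in `y_c` iff `Δ_u > d_c + κ` and constant iff
`Δ_u = d_c + κ`. -/
theorem resilient_regime_surplus_trends
    (γ k0 y1 y2 yc κ dc d u w r1 r2 p1sb p2sb : ℝ)
    (hγ : γ ∈ Set.Ioo (0 : ℝ) 1) (hk0 : 0 < k0) (hy1 : 0 < y1) (hy2 : 0 < y2)
    (hyc : 0 ≤ yc) (hdu : d < u) (hw : w ∈ Set.Ioo (0 : ℝ) 1)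
    (hp1 : p1sb ∈ Set.Ioo (0 : ℝ) 1) (hp2 : p2sb ∈ Set.Ioo (0 : ℝ) 1)
    (rbar Δu Δr : ℝ)
    (hrbar : rbar = u * (1 - w) + d * w) (hΔu : Δu = u - r2) (hΔr : Δr = rbar - r2)
    (ES1 ES2 S2u : ℝ → ℝ)
    (hES1 : ∀ t : ℝ, ES1 t = k0 * (1 + rbar - (dc + κ)) - ((1 - γ) / γ) * t * (Δr - dc - κ)
                + y1 * p1sb * (rbar - dc - κ - r1))
    (hES2 : ∀ t : ℝ, ES2 t = k0 * (1 + rbar - (dc + κ)) + (y2 * p2sb + t) * (Δr - dc - κ))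
    (hS2u : ∀ t : ℝ, S2u t = k0 * (1 + u - dc - κ) + (y2 * p2sb + t) * (Δu - (dc + κ))) :
    -- (a)
    ((Δr ≤ dc + κ ∧ r1 < r2 ∧ y1 * p1sb ≤ y2 * p2sb + yc / γ) → ES2 yc ≤ ES1 yc)
    -- (b)
    ∧ (∀ t : ℝ, ES1 t = ES1 0 + ((1 - γ) / γ) * (dc + κ - Δr) * t)
    ∧ (StrictMonoOn ES1 (Set.Ici 0) ↔ Δr < dc + κ)
    ∧ ((∀ t ∈ Set.Ici (0 : ℝ), ES1 t = ES1 0) ↔ Δr = dc + κ)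
    -- (c)
    ∧ (∀ t : ℝ, S2u t = S2u 0 + (Δu - (dc + κ)) * t)
    ∧ (StrictMonoOn S2u (Set.Ici 0) ↔ dc + κ < Δu)
    ∧ ((∀ t ∈ Set.Ici (0 : ℝ), S2u t = S2u 0) ↔ Δu = dc + κ) :=
  resilient_regime_surplus_trends_general γ k0 y1 y2 yc κ dc u r1 r2 p1sb p2sb hγ hy1 hp1 rbar Δu Δr
    hΔr ES1 ES2 S2u hES1 hES2 hS2u
end
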